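/- arXiv:2103.09966 — 8 statements merged into one kernel-verified Lean document; each statement's English description precedes it below -/
import Mathlib

section
/- Let G_c, k_c, i_max, x* > 0 and define f(x) = -G_c x^2 + x·min(k_c(x* - x), i_max) for x > 0. Let x_m = x* - i_max/k_c and suppose 0 < x_m < x* and the maximum of x ↦ -G_c x^2 + x·i_max over (0, x_m] is attained in the interior (i.e., i_max/(2G_c) < x_m). Then for every value ū with 0 < ū < f(x_m), there exist exactly two solutions x̄₁, x̄₂ of f(x) = ū with 0 < x̄₂ < x_m < x̄₁. -/
private lemma aux_sqrt_gt (c D : ℝ) (hD : c ^ 2 < D) : c < Real.sqrt D := by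
  rcases le_or_gt c 0 with h | h
  · exact h.trans_lt (Real.sqrt_pos.mpr (lt_of_le_of_lt (sq_nonneg c) hD))
  · exact (Real.lt_sqrt h.le).mpr hD

/-- Steady-state power–voltage characteristic of a class-A GFC: for every power
level `u` strictly between `0` and `f x_m`, there are exactly two equilibria,
one on each side of the saturation breakpoint `x_m`. -/
theorem stmt0 (G k imax xs : ℝ) (hG : 0 < G) (hk : 0 < k) (hi : 0 < imax)
    (hxs : 0 < xs)
    (f : ℝ → ℝ) (hf : ∀ x, f x = -G * x ^ 2 + x * min (k * (xs - x)) imax)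
    (xm : ℝ) (hxm : xm = xs - imax / k) (hxm0 : 0 < xm) (hxm1 : xm < xs)
    (hvertex : imax / (2 * G) < xm) :
    ∀ u : ℝ, 0 < u → u < f xm →
      ∃ x1 x2 : ℝ, 0 < x2 ∧ x2 < xm ∧ xm < x1 ∧ f x1 = u ∧ f x2 = u ∧
        ∀ x : ℝ, 0 < x → f x = u → x = x1 ∨ x = x2 := by
  intro u hu1 hu2
  have hk' : k ≠ 0 := ne_of_gt hk
  have hkxm : k * (xs - xm) = imax := by rw [hxm]; field_simp; ring
  have hfxm : f xm = -G * xm ^ 2 + xm * imax := by rw [hf, hkxm, min_self]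
  have hu' : u < -G * xm ^ 2 + xm * imax := hfxm ▸ hu2
  have himax2 : imax < 2 * G * xm := by
    rw [div_lt_iff₀ (by positivity)] at hvertex; linarith
  have hA : 0 < G + k := by linarith
  have hkxm' : xm * imax = xm * (k * xs) - k * xm ^ 2 := by linear_combination (-xm) * hkxm
  -- first quadratic (saturated branch)
  have hD1 : (2 * G * xm - imax) ^ 2 < imax ^ 2 - 4 * G * u := by nlinarith
  set s := Real.sqrt (imax ^ 2 - 4 * G * u) with hsdef
  have hsnn : 0 ≤ s := Real.sqrt_nonneg _
  have hs_sq : s * s = imax ^ 2 - 4 * G * u :=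
    Real.mul_self_sqrt (le_trans (sq_nonneg _) hD1.le)
  have hs_gt : 2 * G * xm - imax < s := aux_sqrt_gt _ _ hD1
  have hs_lt : s < imax := by
    rw [hsdef]; exact (Real.sqrt_lt' hi).mpr (by nlinarith)
  -- second quadratic (unsaturated branch)
  have hD2 : (2 * (G + k) * xm - k * xs) ^ 2 < (k * xs) ^ 2 - 4 * (G + k) * u := by
    nlinarith
  set s2 := Real.sqrt ((k * xs) ^ 2 - 4 * (G + k) * u) with hs2def
  have hs2nn : 0 ≤ s2 := Real.sqrt_nonneg _
  have hs2_sq : s2 * s2 = (k * xs) ^ 2 - 4 * (G + k) * u :=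
    Real.mul_self_sqrt (le_trans (sq_nonneg _) hD2.le)
  have hs2_gt : 2 * (G + k) * xm - k * xs < s2 := aux_sqrt_gt _ _ hD2
  have hs2_gt' : k * xs - 2 * (G + k) * xm < s2 := aux_sqrt_gt _ _ (by nlinarith [hD2])
  set x1 := (k * xs + s2) / (2 * (G + k)) with hx1def
  set x2 := (imax - s) / (2 * G) with hx2def
  have h2G : 2 * G * x2 = imax - s := by rw [hx2def]; field_simp
  have h2A : 2 * (G + k) * x1 = k * xs + s2 := by rw [hx1def]; field_simp
  have hx2pos : 0 < x2 := by
    rw [hx2def]; exact div_pos (by linarith) (by positivity)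
  have hx2lt : x2 < xm := by
    rw [hx2def, div_lt_iff₀ (by positivity)]; linarith
  have hx1gt : xm < x1 := by
    rw [hx1def, lt_div_iff₀ (by positivity)]; linarith
  have hfx1 : f x1 = u := by
    have hle1 : k * (xs - x1) ≤ k * (xs - xm) :=
      mul_le_mul_of_nonneg_left (by linarith) hk.le
    have hmin1 : min (k * (xs - x1)) imax = k * (xs - x1) :=
      min_eq_left (le_trans hle1 (le_of_eq hkxm))
    rw [hf, hmin1]
    have key1 : 4 * (G + k) * (-G * x1 ^ 2 + x1 * (k * (xs - x1))) = 4 * (G + k) * u := by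
      linear_combination (k * xs - s2 - 2 * (G + k) * x1) * h2A - hs2_sq
    exact mul_left_cancel₀ (by positivity) key1
  have hfx2 : f x2 = u := by
    have hle2 : k * (xs - xm) ≤ k * (xs - x2) :=
      mul_le_mul_of_nonneg_left (by linarith) hk.le
    have hmin2 : min (k * (xs - x2)) imax = imax :=
      min_eq_right (hkxm ▸ hle2)
    rw [hf, hmin2]
    have key2 : 4 * G * (-G * x2 ^ 2 + x2 * imax) = 4 * G * u := by
      linear_combination (imax + s - 2 * G * x2) * h2G - hs_sq
    exact mul_left_cancel₀ (by positivity) key2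
  refine ⟨x1, x2, hx2pos, hx2lt, hx1gt, hfx1, hfx2, ?_⟩
  intro x hx hfx
  rcases le_or_gt x xm with hle | hgt
  · -- saturated branch
    have hlem : k * (xs - xm) ≤ k * (xs - x) :=
      mul_le_mul_of_nonneg_left (by linarith) hk.le
    have hmin : min (k * (xs - x)) imax = imax := min_eq_right (hkxm ▸ hlem)
    rw [hf, hmin] at hfx
    have hfact : (2 * G * x - (imax - s)) * (2 * G * x - (imax + s)) = 0 := by
      linear_combination (-1) * hs_sq - 4 * G * hfx
    rcases mul_eq_zero.mp hfact with h | h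
    · right
      have hx' : 2 * G * x = 2 * G * x2 := by linarith
      exact mul_left_cancel₀ (by positivity : (2 * G : ℝ) ≠ 0) hx'
    · exfalso
      have hxx : 2 * G * x ≤ 2 * G * xm := mul_le_mul_of_nonneg_left hle (by positivity)
      linarith
  · -- unsaturated branch
    have hlem : k * (xs - x) ≤ k * (xs - xm) :=
      mul_le_mul_of_nonneg_left (by linarith) hk.le
    have hmin : min (k * (xs - x)) imax = k * (xs - x) :=
      min_eq_left (le_trans hlem (le_of_eq hkxm))
    rw [hf, hmin] at hfx
    have hfact : (2 * (G + k) * x - (k * xs - s2)) * (2 * (G + k) * x - (k * xs + s2)) = 0 := by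
      linear_combination (-1) * hs2_sq - 4 * (G + k) * hfx
    rcases mul_eq_zero.mp hfact with h | h
    · exfalso
      have hxx : 2 * (G + k) * xm ≤ 2 * (G + k) * x :=
        mul_le_mul_of_nonneg_left hgt.le (by positivity)
      linarith
    · left
      have hx' : 2 * (G + k) * x = 2 * (G + k) * x1 := by linarith
      exact mul_left_cancel₀ (by positivity : (2 * (G + k) : ℝ) ≠ 0) hx'
end

section
/- Let C, G, k, ū, x̄, x_m > 0 with x̄ ≥ x_m and m := -(G + k) + ū/(x̄·x_m) < 0. Then the equilibrium y = 0 of the ODE C ẏ = -(G + k)y + (ū/x̄)·y/(y + x̄) is exponentially stable on the region y ∈ [x_m - x̄, ∞) ∩ (-x̄, ∞): every solution starting there satisfies |y(t)| ≤ |y(0)| e^{(m/C) t}. -/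
/-- Exponential stability of `y = 0` for the class-A GFC dc-voltage error
dynamics in the unsaturated region: every solution staying in
`[x_m - x̄, ∞) ∩ (-x̄, ∞)` satisfies `|y t| ≤ |y 0| e^{(m/C) t}` with
`m = -(G+k) + ū/(x̄ x_m) < 0`. -/
theorem stmt2 (C G k ubar xbar xm m : ℝ) (hC : 0 < C) (hG : 0 < G)
    (hk : 0 < k) (hu : 0 < ubar) (hx : 0 < xbar) (hxm : 0 < xm)
    (hle : xm ≤ xbar)
    (hm : m = -(G + k) + ubar / (xbar * xm)) (hmneg : m < 0)
    (y : ℝ → ℝ)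
    (hode : ∀ t ≥ (0 : ℝ), HasDerivAt y
      ((1 / C) * (-(G + k) * y t + (ubar / xbar) * y t / (y t + xbar))) t)
    (hreg : ∀ t ≥ (0 : ℝ), xm - xbar ≤ y t ∧ -xbar < y t) :
    ∀ t ≥ (0 : ℝ), |y t| ≤ |y 0| * Real.exp ((m / C) * t) := by
  set c : ℝ := m / C with hc
  set h : ℝ → ℝ := fun t => (y t) ^ 2 * Real.exp (-(2 * c) * t) with hh
  -- derivative of h
  have hder : ∀ t ≥ (0:ℝ), HasDerivAt h
      ((2 * y t * ((1 / C) * (-(G + k) * y t + (ubar / xbar) * y t / (y t + xbar)))) *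
        Real.exp (-(2 * c) * t) +
        (y t) ^ 2 * (Real.exp (-(2 * c) * t) * (-(2 * c)))) t := by
    intro t ht
    have h1 : HasDerivAt (fun s => (y s) ^ 2)
        (2 * y t * ((1 / C) * (-(G + k) * y t + (ubar / xbar) * y t / (y t + xbar)))) t := by
      have : HasDerivAt (fun s => (y s) ^ 2) _ t := (hode t ht).fun_pow 2
      convert this using 1
      push_cast
      ring
    have hd : HasDerivAt (fun s : ℝ => -(2 * c) * s) (-(2 * c)) t := by
      simpa using (hasDerivAt_id t).const_mul (-(2 * c))
    exact h1.mul hd.exp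
  -- the derivative is nonpositive
  have hle' : ∀ t ≥ (0:ℝ),
      (2 * y t * ((1 / C) * (-(G + k) * y t + (ubar / xbar) * y t / (y t + xbar)))) *
        Real.exp (-(2 * c) * t) +
        (y t) ^ 2 * (Real.exp (-(2 * c) * t) * (-(2 * c))) ≤ 0 := by
    intro t ht
    obtain ⟨hr1, hr2⟩ := hreg t ht
    have hp0 : 0 < y t + xbar := by linarith
    have hpm : xm ≤ y t + xbar := by linarith
    have hdiv : (y t)^2 / (y t + xbar) ≤ (y t)^2 / xm :=
      div_le_div_of_nonneg_left (sq_nonneg _) hxm hpm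
    have hu2 : 0 < ubar / xbar := div_pos hu hx
    have key2 : y t * (-(G + k) * y t + (ubar / xbar) * y t / (y t + xbar))
        ≤ m * (y t)^2 := by
      have e1 : y t * (-(G + k) * y t + (ubar / xbar) * y t / (y t + xbar))
          = -(G + k) * (y t)^2 + (ubar / xbar) * ((y t)^2 / (y t + xbar)) := by ring
      have e2 : m * (y t)^2 = -(G + k) * (y t)^2 + (ubar / xbar) * ((y t)^2 / xm) := by
        rw [hm]; field_simp
      rw [e1, e2]
      have := mul_le_mul_of_nonneg_left hdiv hu2.le
      linarith
    have key : y t * ((1 / C) * (-(G + k) * y t + (ubar / xbar) * y t / (y t + xbar)))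
        ≤ c * (y t)^2 := by
      have h1C : 0 < 1 / C := by positivity
      calc y t * ((1 / C) * (-(G + k) * y t + (ubar / xbar) * y t / (y t + xbar)))
          = (1 / C) * (y t * (-(G + k) * y t + (ubar / xbar) * y t / (y t + xbar))) := by ring
        _ ≤ (1 / C) * (m * (y t)^2) := by
            exact mul_le_mul_of_nonneg_left key2 h1C.le
        _ = c * (y t)^2 := by rw [hc]; ring
    have hexp : 0 < Real.exp (-(2 * c) * t) := Real.exp_pos _
    nlinarith [mul_le_mul_of_nonneg_right key hexp.le]
  -- h is antitone on Ici 0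
  have hcont : ContinuousOn h (Set.Ici 0) := fun t ht =>
    ((hder t ht).continuousAt).continuousWithinAt
  have hanti : AntitoneOn h (Set.Ici 0) := by
    apply antitoneOn_of_deriv_nonpos (convex_Ici 0) hcont
    · intro t ht
      rw [interior_Ici] at ht
      exact (hder t (le_of_lt ht)).differentiableAt.differentiableWithinAt
    · intro t ht
      rw [interior_Ici] at ht
      rw [(hder t (le_of_lt ht)).deriv]
      exact hle' t (le_of_lt ht)
  intro t ht
  have hmono := hanti (Set.self_mem_Ici) ht ht
  simp only [hh, mul_zero, Real.exp_zero, mul_one] at hmono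
  have hE : Real.exp (-(2 * c) * t) * Real.exp (2 * c * t) = 1 := by
    rw [← Real.exp_add, show -(2 * c) * t + 2 * c * t = 0 by ring, Real.exp_zero]
  have h1 : (y t)^2 ≤ (y 0)^2 * Real.exp (2 * c * t) := by
    nlinarith [mul_le_mul_of_nonneg_right hmono (Real.exp_nonneg (2 * c * t))]
  have h3 : (y t)^2 ≤ (|y 0| * Real.exp (c * t))^2 := by
    have : (|y 0| * Real.exp (c * t))^2 = (y 0)^2 * Real.exp (2 * c * t) := by
      rw [mul_pow, sq_abs, sq (Real.exp (c * t)), ← Real.exp_add,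
        show c * t + c * t = 2 * c * t by ring]
    rw [this]; exact h1
  calc |y t| = Real.sqrt ((y t)^2) := (Real.sqrt_sq_eq_abs _).symm
    _ ≤ Real.sqrt ((|y 0| * Real.exp (c * t))^2) := Real.sqrt_le_sqrt h3
    _ = |y 0| * Real.exp (c * t) := Real.sqrt_sq (by positivity)
end

section
/- Consider the scalar ODE C ẏ = -G(y + x̄) + i_max - ū/(y + x̄) on y ∈ (-x̄, x_m - x̄], where C, G, i_max, ū, x̄ > 0, ū = -G x̄² + x̄ i_max (so y = 0 is an equilibrium), and x̄ < i_max/(2G). Then the function V(y) = (C/2)(x̄² - (y + x̄)²) satisfies V(0) = 0, V(y) > 0 for y ∈ (-x̄, 0), and V̇(y) > 0 along trajectories for all y ∈ (-x̄, 0); consequently the equilibrium y = 0 is unstable, and every solution with initial condition y(0) ∈ (-x̄, 0) is strictly decreasing in V-level and moves away from 0. -/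
/-- Chetaev instability of the low-voltage (saturated-region) equilibrium of a
class-A GFC: `V(y) = (C/2)(x̄² - (y+x̄)²)` vanishes at `0`, is positive on
`(-x̄, 0)`, and has positive derivative along trajectories there; consequently
every solution starting in `(-x̄, 0)` has strictly increasing `V`-level and
moves away from `0`. -/
theorem stmt5 (C G imax ubar xbar : ℝ) (hC : 0 < C) (hG : 0 < G)
    (hi : 0 < imax) (hu : 0 < ubar) (hx : 0 < xbar)
    (heq : ubar = -G * xbar ^ 2 + xbar * imax)
    (hvx : xbar < imax / (2 * G))
    (V : ℝ → ℝ) (hV : ∀ y, V y = (C / 2) * (xbar ^ 2 - (y + xbar) ^ 2)) :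
    V 0 = 0 ∧
    (∀ y ∈ Set.Ioo (-xbar) 0, 0 < V y) ∧
    (∀ y ∈ Set.Ioo (-xbar) 0,
      0 < (-(C * (y + xbar))) *
        ((1 / C) * (-G * (y + xbar) + imax - ubar / (y + xbar)))) ∧
    (∀ y : ℝ → ℝ,
      (∀ t ≥ (0 : ℝ), y t ∈ Set.Ioo (-xbar) 0 ∧
        HasDerivAt y
          ((1 / C) * (-G * (y t + xbar) + imax - ubar / (y t + xbar))) t) →
      ∀ t₁ ∈ Set.Ici (0 : ℝ), ∀ t₂ ∈ Set.Ici (0 : ℝ), t₁ < t₂ →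
        V (y t₁) < V (y t₂) ∧ |y t₁| < |y t₂|) := by
  have h2G : 2 * G * xbar < imax := by
    rw [lt_div_iff₀ (by positivity)] at hvx; linarith
  -- key positivity
  have key : ∀ z ∈ Set.Ioo (-xbar) 0,
      0 < (-(C * (z + xbar))) *
        ((1 / C) * (-G * (z + xbar) + imax - ubar / (z + xbar))) := by
    intro z hz
    obtain ⟨hz1, hz2⟩ := hz
    have hs : 0 < z + xbar := by linarith
    have hsx : z + xbar < xbar := by linarith
    have hsne : z + xbar ≠ 0 := ne_of_gt hs
    have hCne : C ≠ 0 := ne_of_gt hC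
    have hexp : (-(C * (z + xbar))) *
        ((1 / C) * (-G * (z + xbar) + imax - ubar / (z + xbar)))
        = G * (z + xbar) ^ 2 - imax * (z + xbar) + ubar := by
      field_simp
      ring
    rw [hexp]
    nlinarith [mul_pos (show (0:ℝ) < xbar - (z + xbar) by linarith)
      (show (0:ℝ) < imax - G * xbar - G * (z + xbar) by nlinarith)]
  have hVfun : V = fun z : ℝ => (C / 2) * (xbar ^ 2 - (z + xbar) ^ 2) :=
    funext hV
  have hVd : ∀ z : ℝ, HasDerivAt V (-(C * (z + xbar))) z := by
    intro z
    have h1 : HasDerivAt (fun w : ℝ => (C / 2) * (xbar ^ 2 - (w + xbar) ^ 2))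
        ((C / 2) * (-(↑2 * (z + xbar) ^ 1 * 1))) z :=
      ((((hasDerivAt_id z).add_const xbar).pow 2).const_sub (xbar ^ 2)).const_mul (C / 2)
    rw [hVfun]
    convert h1 using 1
    push_cast
    ring
  refine ⟨by rw [hV]; ring, ?_, key, ?_⟩
  · intro z hz
    obtain ⟨hz1, hz2⟩ := hz
    rw [hV]
    have hs : 0 < z + xbar := by linarith
    have hsx : z + xbar < xbar := by linarith
    have hsq : (z + xbar) ^ 2 < xbar ^ 2 := by nlinarith
    have : (0:ℝ) < C / 2 := by linarith
    nlinarith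
  · intro y hy t₁ ht₁ t₂ ht₂ hlt
    have hcomp : ∀ t ∈ Set.Ici (0:ℝ), HasDerivAt (fun t => V (y t))
        ((-(C * (y t + xbar))) *
          ((1 / C) * (-G * (y t + xbar) + imax - ubar / (y t + xbar)))) t := by
      intro t ht
      exact (hVd (y t)).comp t (hy t ht).2
    have mono : StrictMonoOn (fun t => V (y t)) (Set.Ici 0) := by
      apply strictMonoOn_of_deriv_pos (convex_Ici 0)
      · intro t ht
        exact (hcomp t ht).continuousAt.continuousWithinAt
      · intro t ht
        rw [interior_Ici] at ht
        rw [(hcomp t (Set.Ioi_subset_Ici_self ht)).deriv]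
        exact key (y t) (hy t (le_of_lt ht)).1
    have hVlt : V (y t₁) < V (y t₂) := mono ht₁ ht₂ hlt
    refine ⟨hVlt, ?_⟩
    obtain ⟨h11, h12⟩ := (hy t₁ ht₁).1
    obtain ⟨h21, h22⟩ := (hy t₂ ht₂).1
    rw [hV, hV] at hVlt
    have hsq : (y t₂ + xbar) ^ 2 < (y t₁ + xbar) ^ 2 := by nlinarith
    have : y t₂ < y t₁ := by nlinarith
    rw [abs_of_neg h12, abs_of_neg h22]
    linarith
end

section
/- Consider the scalar ODE C ẏ = -G(y + x̄) + i_max - ū/(y + x̄) on y ∈ (-x̄, x_m - x̄], with C, G, i_max, ū, x̄ > 0, ū = -G x̄² + x̄ i_max, and x̄ < i_max/(2G). Then W(y) = (C/2)((y + x̄)² - x̄²) satisfies W(0) = 0, W(y) > 0 for y ∈ (0, x_m - x̄], and Ẇ(y) > 0 along trajectories for y ∈ (0, x_m - x̄]; hence every solution starting in (x̄, x_m] (in original coordinates) is strictly increasing and reaches x_m. -/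
open Set Filter Topology

/-- Invariance: if the vector field is positive on `[y 0, B]` and the solution
stays below `B` on `[0, T]`, then it stays above `y 0` on `[0, T]`. -/
lemma aux_invariant (f y : ℝ → ℝ) (B T : ℝ)
    (hy : ∀ t ≥ (0:ℝ), HasDerivAt y (f (y t)) t)
    (hf : ∀ v, y 0 ≤ v → v ≤ B → 0 < f v)
    (hT : 0 ≤ T) (hub : ∀ s ∈ Set.Icc (0:ℝ) T, y s ≤ B) :
    ∀ s ∈ Set.Icc (0:ℝ) T, y 0 ≤ y s := by
  set A := {t ∈ Set.Icc (0:ℝ) T | ∀ s ∈ Set.Icc (0:ℝ) t, y 0 ≤ y s} with hA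
  have h0A : (0:ℝ) ∈ A := by
    refine ⟨⟨le_refl 0, hT⟩, fun s hs => ?_⟩
    have : s = 0 := le_antisymm hs.2 hs.1
    simp [this]
  have hbdd : BddAbove A := ⟨T, fun t ht => ht.1.2⟩
  set m := sSup A with hm
  have hmT : m ≤ T := csSup_le ⟨0, h0A⟩ (fun t ht => ht.1.2)
  have hm0 : 0 ≤ m := le_csSup hbdd h0A
  have hlt : ∀ s, 0 ≤ s → s < m → y 0 ≤ y s := by
    intro s hs0 hsm
    obtain ⟨t, htA, hst⟩ := exists_lt_of_lt_csSup ⟨0, h0A⟩ hsm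
    exact htA.2 s ⟨hs0, hst.le⟩
  have hym : y 0 ≤ y m := by
    rcases eq_or_lt_of_le hm0 with h | h
    · rw [← h]
    · have hcont : ContinuousAt y m := (hy m hm0).continuousAt
      refine ge_of_tendsto (hcont.tendsto.mono_left nhdsWithin_le_nhds :
        Tendsto y (𝓝[<] m) (𝓝 (y m))) ?_
      filter_upwards [Ioo_mem_nhdsLT_of_mem (⟨h, le_refl m⟩ : m ∈ Set.Ioc 0 m)] with s hs
      exact hlt s hs.1.le hs.2
  have hmA : m ∈ A := by
    refine ⟨⟨hm0, hmT⟩, fun s hs => ?_⟩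
    rcases lt_or_eq_of_le hs.2 with h | h
    · exact hlt s hs.1 h
    · rw [h]; exact hym
  rcases eq_or_lt_of_le hmT with hMT | hMT
  · exact fun s hs => hmA.2 s ⟨hs.1, hs.2.trans_eq hMT.symm⟩
  · exfalso
    have hpos : 0 < f (y m) := hf _ hym (hub m ⟨hm0, hmT⟩)
    have hslope := hasDerivAt_iff_tendsto_slope.mp (hy m hm0)
    have hev : ∀ᶠ t in 𝓝[>] m, 0 < slope y m t := by
      have h1 : (𝓝[>] m : Filter ℝ) ≤ 𝓝[≠] m :=
        nhdsWithin_mono m (fun x hx => Set.mem_compl_singleton_iff.mpr (ne_of_gt hx))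
      exact (hslope.mono_left h1).eventually (eventually_gt_nhds hpos)
    have hev2 : ∀ᶠ t in 𝓝[>] m, y m < y t := by
      filter_upwards [hev, self_mem_nhdsWithin] with t ht htm
      have h2 : 0 < t - m := sub_pos.2 htm
      rw [slope_def_field] at ht
      have h3 := mul_pos ht h2
      rw [div_mul_cancel₀ _ (ne_of_gt h2)] at h3
      linarith
    obtain ⟨u, hu, hsub⟩ := mem_nhdsGT_iff_exists_Ioo_subset.mp hev2
    have hu' : m < u := hu
    set m' := min ((m + u) / 2) T with hm'
    have hm'm : m < m' := lt_min (by linarith) hMT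
    have hm'A : m' ∈ A := by
      refine ⟨⟨by linarith, min_le_right _ _⟩, fun s hs => ?_⟩
      rcases le_or_gt s m with h | h
      · exact hmA.2 s ⟨hs.1, h⟩
      · have hsu : s ∈ Set.Ioo m u := ⟨h, lt_of_le_of_lt (hs.2.trans (min_le_left _ _)) (by linarith)⟩
        exact hym.trans (hsub hsu).le
    have := le_csSup hbdd hm'A
    linarith

/-- Reaching lemma: positive vector field bounded below by `ε` on `[y 0, B]`
forces the solution to reach `B`, increasing strictly on the way. -/
lemma aux_reach (f y : ℝ → ℝ) (B ε : ℝ)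
    (hy : ∀ t ≥ (0:ℝ), HasDerivAt y (f (y t)) t)
    (hε : 0 < ε)
    (hf : ∀ v, y 0 ≤ v → v ≤ B → ε ≤ f v)
    (hy0 : 0 < y 0) (hy0B : y 0 ≤ B) :
    ∃ T ≥ (0:ℝ), y T = B ∧ StrictMonoOn y (Set.Icc 0 T) := by
  have hfpos : ∀ v, y 0 ≤ v → v ≤ B → 0 < f v := fun v h1 h2 => hε.trans_le (hf v h1 h2)
  have hycont : ∀ a b : ℝ, 0 ≤ a → ContinuousOn y (Set.Icc a b) := by
    intro a b ha t ht
    exact ((hy t (ha.trans ht.1)).continuousAt).continuousWithinAt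
  rcases eq_or_lt_of_le hy0B with hEq | hltB0
  · refine ⟨0, le_refl 0, hEq.symm ▸ rfl, ?_⟩
    intro a ha b hb hab
    have ha' : a = 0 := le_antisymm ha.2 ha.1
    have hb' : b = 0 := le_antisymm hb.2 hb.1
    rw [ha', hb'] at hab; exact absurd hab (lt_irrefl 0)
  have step1 : ∃ t ≥ (0:ℝ), B ≤ y t := by
    by_contra hcon
    push_neg at hcon
    set T₁ := (B - y 0) / ε with hT₁def
    have hT₁ : 0 ≤ T₁ := div_nonneg (by linarith) hε.le
    have hub : ∀ s ∈ Set.Icc (0:ℝ) T₁, y s ≤ B := fun s hs => (hcon s hs.1).le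
    have hinv := aux_invariant f y B T₁ hy hfpos hT₁ hub
    have hz : MonotoneOn (fun t => y t - ε * t) (Set.Icc 0 T₁) := by
      apply monotoneOn_of_deriv_nonneg (convex_Icc _ _)
      · exact (hycont 0 T₁ le_rfl).sub ((continuous_const.mul continuous_id).continuousOn)
      · intro t ht
        rw [interior_Icc] at ht
        exact (((hy t ht.1.le).sub ((hasDerivAt_id t).const_mul ε)).differentiableAt).differentiableWithinAt
      · intro t ht
        rw [interior_Icc] at ht
        have hd : HasDerivAt (fun t => y t - ε * t) (f (y t) - ε * 1) t :=
          (hy t ht.1.le).sub ((hasDerivAt_id t).const_mul ε)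
        rw [hd.deriv]
        have h1 := hf (y t) (hinv t ⟨ht.1.le, ht.2.le⟩) (hub t ⟨ht.1.le, ht.2.le⟩)
        linarith
    have hz0 := hz (Set.left_mem_Icc.2 hT₁) (Set.right_mem_Icc.2 hT₁) hT₁
    simp only [mul_zero, sub_zero] at hz0
    have hεT : ε * T₁ = B - y 0 := by
      rw [hT₁def]; field_simp
    have := hcon T₁ hT₁
    linarith
  obtain ⟨t₁, ht₁0, ht₁B⟩ := step1
  obtain ⟨s₁, hs₁mem, hs₁⟩ := intermediate_value_Icc ht₁0 (hycont 0 t₁ le_rfl)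
    (⟨hltB0.le, ht₁B⟩ : B ∈ Set.Icc (y 0) (y t₁))
  set S := {t ∈ Set.Icc (0:ℝ) s₁ | y t = B} with hS
  have hSclosed : IsClosed S := by
    have := (hycont 0 s₁ le_rfl).preimage_isClosed_of_isClosed isClosed_Icc
      (isClosed_singleton (x := B))
    exact this
  have hScpt : IsCompact S := isCompact_Icc.of_isClosed_subset hSclosed (fun t ht => ht.1)
  have hSne : S.Nonempty := ⟨s₁, ⟨⟨hs₁mem.1, le_rfl⟩, hs₁⟩⟩
  obtain ⟨T, hTS, hTleast⟩ := hScpt.exists_isLeast hSne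
  have hT0 : 0 ≤ T := hTS.1.1
  have hTB : y T = B := hTS.2
  have hTs₁ : T ≤ s₁ := hTS.1.2
  have hltB : ∀ s, 0 ≤ s → s < T → y s < B := by
    intro s hs0 hsT
    rcases lt_trichotomy (y s) B with h | h | h
    · exact h
    · exact absurd (hTleast ⟨⟨hs0, hsT.le.trans hTs₁⟩, h⟩) (not_le.2 hsT)
    · obtain ⟨r, hrmem, hr⟩ := intermediate_value_Icc hs0 (hycont 0 s le_rfl)
        (⟨hltB0.le, h.le⟩ : B ∈ Set.Icc (y 0) (y s))
      have hrS : r ∈ S := ⟨⟨hrmem.1, hrmem.2.trans (hsT.le.trans hTs₁)⟩, hr⟩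
      have := hTleast hrS
      linarith [hrmem.2]
  have hub : ∀ s ∈ Set.Icc (0:ℝ) T, y s ≤ B := by
    intro s hs
    rcases eq_or_lt_of_le hs.2 with h | h
    · rw [h]; exact hTB.le
    · exact (hltB s hs.1 h).le
  have hinv := aux_invariant f y B T hy hfpos hT0 hub
  refine ⟨T, hT0, hTB, ?_⟩
  apply strictMonoOn_of_deriv_pos (convex_Icc 0 T) (hycont 0 T le_rfl)
  intro t ht
  rw [interior_Icc] at ht
  rw [(hy t ht.1.le).deriv]
  exact hfpos _ (hinv t ⟨ht.1.le, ht.2.le⟩) (hub t ⟨ht.1.le, ht.2.le⟩)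

/-- Second half of the class-A region-of-attraction argument: with the Chetaev
function `W(y) = (C/2)((y+x̄)² - x̄²)`, `W` vanishes at `0`, is positive on
`(0, x_m - x̄]`, has positive derivative along trajectories there, and every
solution starting in `(0, x_m - x̄]` (i.e. in `(x̄, x_m]` in original
coordinates) increases strictly until it reaches `x_m`. -/
theorem stmt6 (C G imax ubar xbar xm : ℝ) (hC : 0 < C) (hG : 0 < G)
    (hi : 0 < imax) (hu : 0 < ubar) (hx : 0 < xbar) (hxxm : xbar < xm)
    (heq : ubar = -G * xbar ^ 2 + xbar * imax)
    (hvx : xbar < imax / (2 * G))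
    (hlevel : ubar < -G * xm ^ 2 + xm * imax)
    (W : ℝ → ℝ) (hW : ∀ y, W y = (C / 2) * ((y + xbar) ^ 2 - xbar ^ 2)) :
    W 0 = 0 ∧
    (∀ y ∈ Set.Ioc 0 (xm - xbar), 0 < W y) ∧
    (∀ y ∈ Set.Ioc 0 (xm - xbar),
      0 < (C * (y + xbar)) *
        ((1 / C) * (-G * (y + xbar) + imax - ubar / (y + xbar)))) ∧
    (∀ y : ℝ → ℝ,
      (∀ t ≥ (0 : ℝ), -xbar < y t ∧
        HasDerivAt y
          ((1 / C) * (-G * (y t + xbar) + imax - ubar / (y t + xbar))) t) →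
      y 0 ∈ Set.Ioc 0 (xm - xbar) →
      ∃ T ≥ (0 : ℝ), y T = xm - xbar ∧ StrictMonoOn y (Set.Icc 0 T)) := by
  -- quadratic positivity
  have hq : ∀ x : ℝ, xbar < x → x ≤ xm → 0 < -G * x ^ 2 + x * imax - ubar := by
    intro x h1 h2
    have hA : 0 < imax - G * (xm + xbar) := by nlinarith
    have hB : 0 < imax - G * (x + xbar) := by nlinarith
    nlinarith [mul_pos (sub_pos.2 h1) hB]
  -- the vector field
  set f : ℝ → ℝ := fun v => (1 / C) * (-G * (v + xbar) + imax - ubar / (v + xbar)) with hf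
  have hfpos : ∀ v : ℝ, 0 < v → v ≤ xm - xbar → 0 < f v := by
    intro v h1 h2
    have hx0 : (0:ℝ) < v + xbar := by linarith
    have hrw : -G * (v + xbar) + imax - ubar / (v + xbar)
        = (-G * (v + xbar) ^ 2 + (v + xbar) * imax - ubar) / (v + xbar) := by
      field_simp
    have : 0 < -G * (v + xbar) ^ 2 + (v + xbar) * imax - ubar :=
      hq (v + xbar) (by linarith) (by linarith)
    simp only [hf, hrw]
    positivity
  refine ⟨by rw [hW]; ring, ?_, ?_, ?_⟩
  · intro y hy
    rw [hW]
    have h1 := hy.1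
    have h2 : 0 < (y + xbar) ^ 2 - xbar ^ 2 := by nlinarith
    exact mul_pos (by linarith) h2
  · intro y hy
    have hx0 : (0:ℝ) < y + xbar := by linarith [hy.1]
    have hrw : (C * (y + xbar)) * ((1 / C) * (-G * (y + xbar) + imax - ubar / (y + xbar)))
        = -G * (y + xbar) ^ 2 + (y + xbar) * imax - ubar := by
      field_simp
    rw [hrw]
    exact hq (y + xbar) (by linarith [hy.1]) (by linarith [hy.2])
  · intro y hy hy0
    have hy' : ∀ t ≥ (0:ℝ), HasDerivAt y (f (y t)) t := fun t ht => (hy t ht).2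
    have hy0pos : 0 < y 0 := hy0.1
    have hy0B : y 0 ≤ xm - xbar := hy0.2
    -- minimum of f on the compact interval
    have hfc : ContinuousOn f (Set.Icc (y 0) (xm - xbar)) := by
      apply ContinuousOn.mul continuousOn_const
      apply ContinuousOn.sub
      · exact ((continuous_const.mul (continuous_id.add continuous_const)).add continuous_const).continuousOn
      · apply ContinuousOn.div continuousOn_const
        · exact (continuous_id.add continuous_const).continuousOn
        · intro v hv
          have : 0 < v + xbar := by linarith [hv.1, hy0pos]
          exact ne_of_gt this
    obtain ⟨v₀, hv₀mem, hmin⟩ := isCompact_Icc.exists_isMinOn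
      ⟨y 0, Set.left_mem_Icc.2 hy0B⟩ hfc
    have hε : 0 < f v₀ := hfpos v₀ (lt_of_lt_of_le hy0pos hv₀mem.1) hv₀mem.2
    exact aux_reach f y (xm - xbar) (f v₀) hy' hε
      (fun v h1 h2 => hmin ⟨h1, h2⟩) hy0pos hy0B
end

section
/- Let H, τ, d_g, d_c, M > 0 and 0 < θ < 1. Consider 2H ω̇ = P - sat_M(d_c ω) + w(t), τ Ṗ = -P - d_g ω with piecewise-continuous input w satisfying sup_t |w(t)| < θ·M. Define χ₁(r) = (M/d_c)·artanh(r/(θM)) and χ₂(r) = (r·d_g·χ₁(r)/θ)^{1/2} for 0 ≤ r < θM. Then along solutions, the Lyapunov function V(ω,P) = Hω² + (τ/(2d_g))P² satisfies V̇ ≤ -(1-θ)(P²/d_g + ω·sat_M(d_c ω)) whenever either |ω| ≥ χ₁(|w|), or (|ω| ≤ χ₁(|w|) and |P| ≥ χ₂(|w|)). -/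
/-- Symmetric saturation at level `M`. -/
def sat (M s : ℝ) : ℝ := max (-M) (min s M)

/-- Inverse hyperbolic tangent. -/
noncomputable def artanh (r : ℝ) : ℝ := (1 / 2) * Real.log ((1 + r) / (1 - r))



lemma exp_mul_exp_neg (x : ℝ) : Real.exp x * Real.exp (-x) = 1 := by
  rw [← Real.exp_add]; simp

lemma exp_bound (x : ℝ) : Real.exp (2*x) * (1 - 2*x) ≤ 1 := by
  have h := Real.add_one_le_exp (-(2*x))
  nlinarith [exp_mul_exp_neg (2*x), Real.exp_pos (2*x)]

lemma key_exp (r : ℝ) (hr : 0 ≤ r) : Real.exp (2*r) * (1 - r) ≤ 1 + r := by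
  set g : ℝ → ℝ := fun x => 1 + x - Real.exp (2*x) * (1 - x) with hg
  have hd : ∀ x, HasDerivAt g (1 - Real.exp (2*x) * (1 - 2*x)) x := by
    intro x
    have h1 : HasDerivAt (fun x : ℝ => Real.exp (2*x)) (Real.exp (2*x) * 2) x := by
      exact ((Real.hasDerivAt_exp (2*x)).comp x ((hasDerivAt_id x).const_mul 2)).congr_deriv (by ring)
    have h2 : HasDerivAt (fun x : ℝ => Real.exp (2*x) * (1 - x))
        (Real.exp (2*x) * 2 * (1 - x) + Real.exp (2*x) * (-1)) x :=
      h1.mul (((hasDerivAt_id x).const_sub 1).congr_deriv (by norm_num))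
    have h3 : HasDerivAt (fun x : ℝ => 1 + x) 1 x := by
      exact (hasDerivAt_id x).const_add 1
    exact (h3.sub h2).congr_deriv (by ring)
  have hmono : Monotone g := monotone_of_hasDerivAt_nonneg hd (by
    intro x
    have h := exp_bound x
    simp only [Pi.zero_apply]
    linarith)
  have h0 : g 0 = 0 := by simp [hg]
  have := hmono hr
  rw [h0] at this
  simp only [hg] at this
  linarith

lemma artanh_ge_self (r : ℝ) (hr0 : 0 ≤ r) (hr1 : r < 1) : r ≤ artanh r := by
  have h1 : (0:ℝ) < 1 - r := by linarith
  have h2 : (0:ℝ) < 1 + r := by linarith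
  have hpos : 0 < (1 + r) / (1 - r) := div_pos h2 h1
  have hexp : Real.exp (2*r) ≤ (1 + r) / (1 - r) := by
    rw [le_div_iff₀ h1]; exact key_exp r hr0
  have := Real.log_le_log (Real.exp_pos _) hexp
  rw [Real.log_exp] at this
  unfold artanh
  linarith

lemma sat_nonneg_mul (M dc a : ℝ) (hM : 0 < M) (hdc : 0 < dc) :
    0 ≤ a * sat M (dc * a) := by
  rcases le_total 0 a with h | h
  · have : 0 ≤ sat M (dc * a) := by
      unfold sat
      have : (0:ℝ) ≤ min (dc*a) M := le_min (by positivity) hM.le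
      exact le_trans this (le_max_right _ _)
    positivity
  · have hs : sat M (dc * a) ≤ 0 := by
      unfold sat
      have h1 : min (dc*a) M ≤ 0 := le_trans (min_le_left _ _) (by nlinarith)
      exact max_le (by linarith) h1
    nlinarith

lemma sat_abs (M dc a : ℝ) (hM : 0 < M) (hdc : 0 < dc) :
    a * sat M (dc * a) = |a| * sat M (dc * |a|) := by
  rcases le_total 0 a with h | h
  · rw [abs_of_nonneg h]
  · rw [abs_of_nonpos h]
    have hodd : sat M (dc * -a) = - sat M (dc * a) := by
      simp only [sat, min_def, max_def]
      split_ifs <;> nlinarith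
    rw [hodd]; ring

/-- Dissipation inequality underlying ISS of the class-B GFC system: along
solutions of `2H ω̇ = P - sat_M(d_c ω) + w`, `τ Ṗ = -P - d_g ω` with
`sup_t |w t| < θM`, the Lyapunov function `V = Hω² + (τ/(2d_g))P²` satisfies
`V̇ ≤ -(1-θ)(P²/d_g + ω sat_M(d_c ω))` whenever `|ω| ≥ χ₁(|w|)` or
(`|ω| ≤ χ₁(|w|)` and `|P| ≥ χ₂(|w|)`). -/
theorem stmt10 (H τ dg dc M θ : ℝ) (hH : 0 < H) (hτ : 0 < τ) (hdg : 0 < dg)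
    (hdc : 0 < dc) (hM : 0 < M) (hθ0 : 0 < θ) (hθ1 : θ < 1)
    (χ₁ χ₂ : ℝ → ℝ)
    (hχ₁ : ∀ r, χ₁ r = (M / dc) * artanh (r / (θ * M)))
    (hχ₂ : ∀ r, χ₂ r = Real.sqrt (r * dg * χ₁ r / θ))
    (ω P w : ℝ → ℝ) (hw : ∀ t, |w t| < θ * M)
    (hω : ∀ t, HasDerivAt ω ((P t - sat M (dc * ω t) + w t) / (2 * H)) t)
    (hP : ∀ t, HasDerivAt P ((-P t - dg * ω t) / τ) t) :
    ∀ t : ℝ,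
      (χ₁ |w t| ≤ |ω t| ∨ (|ω t| ≤ χ₁ |w t| ∧ χ₂ |w t| ≤ |P t|)) →
      HasDerivAt (fun s => H * (ω s) ^ 2 + τ / (2 * dg) * (P s) ^ 2)
        (ω t * w t - ω t * sat M (dc * ω t) - (P t) ^ 2 / dg) t ∧
      ω t * w t - ω t * sat M (dc * ω t) - (P t) ^ 2 / dg ≤
        -(1 - θ) * ((P t) ^ 2 / dg + ω t * sat M (dc * ω t)) := by
  intro t hcase
  have hdg' : (dg:ℝ) ≠ 0 := ne_of_gt hdg
  have hH' : (H:ℝ) ≠ 0 := ne_of_gt hH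
  have hθ' : θ ≠ 0 := ne_of_gt hθ0
  constructor
  · have h1 := ((hω t).pow 2).const_mul H
    have h2 := ((hP t).pow 2).const_mul (τ / (2 * dg))
    exact (h1.add h2).congr_deriv (by field_simp; ring)
  · -- notation
    have hsat0 : 0 ≤ ω t * sat M (dc * ω t) := sat_nonneg_mul M dc (ω t) hM hdc
    have hp2 : 0 ≤ (P t) ^ 2 / dg := by positivity
    have hr0 : 0 ≤ |w t| / (θ * M) := by positivity
    have hr1 : |w t| / (θ * M) < 1 := by
      rw [div_lt_one (by positivity)]; exact hw t
    have hart := artanh_ge_self _ hr0 hr1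
    have hartnn : 0 ≤ artanh (|w t| / (θ * M)) := le_trans hr0 hart
    have hχ1nn : 0 ≤ χ₁ |w t| := by
      rw [hχ₁]; positivity
    have key : ω t * w t ≤ θ * (ω t * sat M (dc * ω t)) + θ * ((P t) ^ 2 / dg) := by
      have hav : ω t * w t ≤ |ω t| * |w t| := by
        calc ω t * w t ≤ |ω t * w t| := le_abs_self _
          _ = |ω t| * |w t| := abs_mul _ _
      rcases hcase with h | ⟨h1, h2⟩
      · -- large frequency case
        have hS : |w t| / θ ≤ sat M (dc * |ω t|) := by
          have hm1 : |w t| / θ ≤ M := by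
            rw [div_le_iff₀ hθ0]; nlinarith [hw t]
          have hm2 : |w t| / θ ≤ dc * |ω t| := by
            have : M * artanh (|w t| / (θ * M)) ≤ dc * |ω t| := by
              have := mul_le_mul_of_nonneg_left h hdc.le
              rw [hχ₁] at this
              calc M * artanh (|w t| / (θ * M))
                  = dc * ((M / dc) * artanh (|w t| / (θ * M))) := by field_simp; all_goals ring
                _ ≤ dc * |ω t| := this
            have : M * (|w t| / (θ * M)) ≤ dc * |ω t| :=
              le_trans (mul_le_mul_of_nonneg_left hart hM.le) this
            have heq : M * (|w t| / (θ * M)) = |w t| / θ := by field_simp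
            linarith [heq ▸ this]
          unfold sat
          exact le_trans (le_min hm2 hm1) (le_max_right _ _)
        have h3 : |ω t| * (|w t| / θ) ≤ |ω t| * sat M (dc * |ω t|) :=
          mul_le_mul_of_nonneg_left hS (abs_nonneg _)
        have h4 : |ω t| * |w t| = θ * (|ω t| * (|w t| / θ)) := by field_simp; all_goals ring
        have h5 : θ * (|ω t| * sat M (dc * |ω t|)) = θ * (ω t * sat M (dc * ω t)) := by
          rw [← sat_abs M dc (ω t) hM hdc]
        nlinarith [mul_le_mul_of_nonneg_left h3 hθ0.le]
      · -- large power case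
        have hsq : |w t| * dg * χ₁ |w t| / θ ≤ (P t) ^ 2 := by
          have harg : 0 ≤ |w t| * dg * χ₁ |w t| / θ := by positivity
          have := pow_le_pow_left₀ (Real.sqrt_nonneg _) ((hχ₂ _) ▸ h2) 2
          rwa [Real.sq_sqrt harg, sq_abs] at this
        rw [div_le_iff₀ hθ0] at hsq
        have h6 : |ω t| * |w t| ≤ χ₁ |w t| * |w t| :=
          mul_le_mul_of_nonneg_right h1 (abs_nonneg _)
        have h7 : χ₁ |w t| * |w t| ≤ θ * ((P t) ^ 2 / dg) := by
          rw [mul_div_assoc', le_div_iff₀ hdg]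
          nlinarith
        linarith [mul_nonneg hθ0.le hsat0]
    nlinarith [key]
end

section
/- Let d_c, M, θ > 0 with θ < 1. For all ω ∈ ℝ and all w with |w| < θM: if |ω| ≥ (M/d_c)·artanh(|w|/(θM)), then θ·ω·sat_M(d_c ω) ≥ |w|·|ω|, where sat_M(s) = max(-M, min(s, M)). -/
lemma exp_two_mul_bound : ∀ r : ℝ, 0 ≤ r → Real.exp (2 * r) * (1 - r) ≤ 1 + r := by
  have hmono : MonotoneOn (fun r : ℝ => (1 + r) - Real.exp (2 * r) * (1 - r)) (Set.Ici 0) := by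
    apply monotoneOn_of_deriv_nonneg (convex_Ici 0)
    · fun_prop
    · intro x hx
      exact (by fun_prop : Differentiable ℝ _).differentiableAt.differentiableWithinAt
    · intro x hx
      have hd : deriv (fun r : ℝ => (1 + r) - Real.exp (2 * r) * (1 - r)) x
          = 1 - (Real.exp (2 * x) * 2 * (1 - x) + Real.exp (2 * x) * (-1)) := by
        have h1 : HasDerivAt (fun r : ℝ => (1 + r) - Real.exp (2 * r) * (1 - r))
            (1 - (Real.exp (2 * x) * 2 * (1 - x) + Real.exp (2 * x) * (-1))) x := by
          have he : HasDerivAt (fun r : ℝ => Real.exp (2 * r)) (Real.exp (2 * x) * 2) x := by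
            simpa using ((hasDerivAt_id x).const_mul 2).exp
          have := ((hasDerivAt_const x (1:ℝ)).add (hasDerivAt_id x)).sub
            (he.mul ((hasDerivAt_const x (1:ℝ)).sub (hasDerivAt_id x)))
          simpa [mul_comm, Pi.add_def, Pi.sub_def, Pi.mul_def] using this
        exact h1.deriv
      rw [hd]
      have key : Real.exp (2 * x) * (1 - 2 * x) ≤ 1 := by
        rcases le_or_gt (1 - 2 * x) 0 with h | h
        · have := Real.exp_pos (2 * x)
          nlinarith
        · have h2 : 1 - 2 * x ≤ Real.exp (-(2 * x)) := by
            have := Real.add_one_le_exp (-(2 * x)); linarith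
          calc Real.exp (2 * x) * (1 - 2 * x) ≤ Real.exp (2 * x) * Real.exp (-(2 * x)) := by
                exact mul_le_mul_of_nonneg_left h2 (Real.exp_pos _).le
            _ = 1 := by rw [← Real.exp_add]; simp
      nlinarith
  intro r hr
  have := hmono (Set.self_mem_Ici) (Set.mem_Ici.mpr hr) hr
  norm_num at this
  linarith

lemma self_le_artanh {r : ℝ} (h0 : 0 ≤ r) (h1 : r < 1) : r ≤ artanh r := by
  unfold artanh
  have hpos : (0:ℝ) < (1 + r) / (1 - r) := div_pos (by linarith) (by linarith)
  have hle : Real.exp (2 * r) ≤ (1 + r) / (1 - r) := by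
    rw [le_div_iff₀ (by linarith)]
    exact exp_two_mul_bound r h0
  have := (Real.le_log_iff_exp_le hpos).mpr hle
  linarith

lemma mul_sat_eq (dc M : ℝ) (hdc : 0 < dc) (hM : 0 < M) (ω : ℝ) :
    ω * sat M (dc * ω) = |ω| * min (dc * |ω|) M := by
  unfold sat
  rcases le_or_gt 0 ω with h | h
  · rw [abs_of_nonneg h]
    have : -M ≤ min (dc * ω) M := le_min (by nlinarith) (by linarith)
    rw [max_eq_right this]
  · rw [abs_of_neg h]
    have h1 : dc * ω < -M ∨ -M ≤ dc * ω := lt_or_ge _ _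
    rcases h1 with h1 | h1
    · rw [min_eq_left (by linarith : dc * ω ≤ M), max_eq_left h1.le,
        min_eq_right (by nlinarith : M ≤ dc * -ω)]
      ring
    · rw [min_eq_left (by nlinarith : dc * ω ≤ M), max_eq_right h1,
        min_eq_left (by nlinarith : dc * -ω ≤ M)]
      ring

/-- Core ISS step for class-B GFCs: once `|ω|` exceeds the threshold
`(M/d_c)·artanh(|w|/(θM))`, the saturated damping term dominates the
disturbance cross term: `θ ω sat_M(d_c ω) ≥ |w||ω|`. -/
theorem stmt11 (dc M θ : ℝ) (hdc : 0 < dc) (hM : 0 < M) (hθ0 : 0 < θ)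
    (hθ1 : θ < 1) :
    ∀ ω w : ℝ, |w| < θ * M →
      (M / dc) * artanh (|w| / (θ * M)) ≤ |ω| →
      |w| * |ω| ≤ θ * (ω * sat M (dc * ω)) := by
  intro ω w hw hth
  rw [mul_sat_eq dc M hdc hM ω]
  have hθM : 0 < θ * M := by positivity
  set r := |w| / (θ * M) with hr
  have hr0 : 0 ≤ r := by positivity
  have hr1 : r < 1 := (div_lt_one hθM).mpr hw
  have hra : r ≤ artanh r := self_le_artanh hr0 hr1
  have h1 : (M / dc) * r ≤ |ω| := by
    have : (M / dc) * r ≤ (M / dc) * artanh r :=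
      mul_le_mul_of_nonneg_left hra (by positivity)
    linarith
  have hwb : |w| ≤ θ * (dc * |ω|) := by
    have : M * r ≤ dc * |ω| := by
      rw [div_mul_eq_mul_div] at h1
      have := (div_le_iff₀ hdc).mp h1
      linarith [this]
    have hMr : M * r = |w| / θ := by
      field_simp [hr]
      rw [hr]; field_simp [hM.ne', hθ0.ne']
    rw [hMr] at this
    rw [div_le_iff₀ hθ0] at this
    nlinarith
  have hmin : |w| ≤ θ * min (dc * |ω|) M := by
    rcases min_cases (dc * |ω|) M with ⟨h, _⟩ | ⟨h, _⟩
    · rw [h]; exact hwb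
    · rw [h]; linarith
  calc |w| * |ω| ≤ (θ * min (dc * |ω|) M) * |ω| :=
        mul_le_mul_of_nonneg_right hmin (abs_nonneg ω)
    _ = θ * (|ω| * min (dc * |ω|) M) := by ring
end

section
/- Consider the system 2H ω̇ = P - sat_M(d_c ω) + w(t), τ Ṗ = -P - d_g ω with H, τ, d_g, d_c, M > 0 and 0 < θ < 1. Suppose w is continuous and sup_{t ≥ t₀} |w(t)| ≤ w̄ < θM. Then the system is input-to-state stable: there exist a class-KL function β and the class-K function γ(r) = √(max(H, τ/(2d_g))/min(H, τ/(2d_g))) · max(χ₁(r), χ₂(r)), with χ₁(r) = (M/d_c) artanh(r/(θM)) and χ₂(r) = (r d_g χ₁(r)/θ)^{1/2}, such that every solution satisfies ‖(ω(t), P(t))‖ ≤ β(‖(ω(t₀), P(t₀))‖, t - t₀) + γ(w̄) for all t ≥ t₀. -/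
/-- A class-K function on `[0,∞)`. -/
def ClassK (g : ℝ → ℝ) : Prop :=
  ContinuousOn g (Set.Ici 0) ∧ StrictMonoOn g (Set.Ici 0) ∧ g 0 = 0

/-- A class-KL function. -/
def ClassKL (β : ℝ → ℝ → ℝ) : Prop :=
  (∀ t ∈ Set.Ici (0 : ℝ), ClassK fun s => β s t) ∧
  ∀ s ∈ Set.Ici (0 : ℝ), AntitoneOn (β s) (Set.Ici 0) ∧
    Filter.Tendsto (β s) Filter.atTop (nhds 0)

lemma traj_deriv (H τ dg dc M t₀ : ℝ) (hH : 0 < H) (hτ : 0 < τ) (hdg : 0 < dg)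
    (w ω P : ℝ → ℝ)
    (hω : ∀ t ≥ t₀, HasDerivAt ω ((P t - sat M (dc * ω t) + w t) / (2 * H)) t)
    (hP : ∀ t ≥ t₀, HasDerivAt P ((-P t - dg * ω t) / τ) t) :
    ∀ s ≥ t₀, HasDerivAt (fun u => H * ω u ^ 2 + τ / (2 * dg) * P u ^ 2)
      (-(ω s * sat M (dc * ω s)) + ω s * w s - P s ^ 2 / dg) s := by
  intro s hs
  have h1 := ((hω s hs).pow 2).const_mul H
  have h2 := ((hP s hs).pow 2).const_mul (τ / (2 * dg))
  have h3 : HasDerivAt (fun u => H * ω u ^ 2 + τ / (2 * dg) * P u ^ 2) _ s := h1.add h2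
  convert h3 using 1
  push_cast
  field_simp
  ring



lemma le_artanh {x : ℝ} (h0 : 0 ≤ x) (h1 : x < 1) : x ≤ artanh x := by
  have hx1 : (0:ℝ) < 1 - x := by linarith
  have hx2 : (0:ℝ) < 1 + x := by linarith
  -- key : (1-x) * Real.exp (2*x) ≤ 1 + x
  have key : (1 - x) * Real.exp x ≤ (1 + x) * Real.exp (-x) := by
    set g : ℝ → ℝ := fun y => (1 + y) * Real.exp (-y) - (1 - y) * Real.exp y with hg
    have hd : ∀ y : ℝ, HasDerivAt g (y * (Real.exp y - Real.exp (-y))) y := by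
      intro y
      have h1' : HasDerivAt (fun y : ℝ => (1 + y) * Real.exp (-y))
          (1 * Real.exp (-y) + (1 + y) * (Real.exp (-y) * (-1))) y := by
        exact (((hasDerivAt_id y).const_add 1)).mul (((hasDerivAt_id y).neg).exp)
      have h2' : HasDerivAt (fun y : ℝ => (1 - y) * Real.exp y)
          ((-1) * Real.exp y + (1 - y) * Real.exp y) y := by
        have : HasDerivAt (fun y : ℝ => 1 - y) (-1) y := by
          exact (hasDerivAt_id y).const_sub 1
        exact this.mul (Real.hasDerivAt_exp y)
      have : HasDerivAt g _ y := h1'.sub h2'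
      convert this using 1
      ring
    have hmono : MonotoneOn g (Set.Icc 0 x) := by
      apply monotoneOn_of_deriv_nonneg (convex_Icc 0 x)
      · exact fun y _ => (hd y).continuousAt.continuousWithinAt
      · exact fun y _ => (hd y).differentiableAt.differentiableWithinAt
      · intro y hy
        rw [interior_Icc] at hy
        rw [(hd y).deriv]
        have hy0 : 0 ≤ y := hy.1.le
        have : Real.exp (-y) ≤ Real.exp y := Real.exp_le_exp.2 (by nlinarith)
        nlinarith
    have h0g : g 0 = 0 := by simp [hg]
    have := hmono (Set.left_mem_Icc.2 h0) (Set.mem_Icc.2 ⟨h0, le_rfl⟩) h0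
    simp only [hg] at this h0g
    linarith [this, h0g.symm.le]
  have hexp : Real.exp (2 * x) ≤ (1 + x) / (1 - x) := by
    rw [le_div_iff₀ hx1]
    have hepos : (0:ℝ) < Real.exp (-x) := Real.exp_pos _
    have := mul_le_mul_of_nonneg_right key (Real.exp_pos x).le
    calc Real.exp (2*x) * (1 - x) = ((1 - x) * Real.exp x) * Real.exp x := by
          rw [mul_comm, mul_assoc, ← Real.exp_add]; ring_nf
      _ ≤ ((1 + x) * Real.exp (-x)) * Real.exp x := this
      _ = 1 + x := by rw [mul_assoc, ← Real.exp_add]; simp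
  have hlog : 2 * x ≤ Real.log ((1 + x) / (1 - x)) :=
    (Real.le_log_iff_exp_le (by positivity)).2 hexp
  unfold artanh; linarith



lemma mul_sat {M : ℝ} (hM : 0 < M) (y : ℝ) : y * sat M y = |y| * min |y| M := by
  unfold sat
  rcases le_total 0 y with hy | hy
  · rw [abs_of_nonneg hy, max_eq_right (le_min (by linarith) (by linarith))]
  · rw [abs_of_nonpos hy, min_eq_left (by linarith : y ≤ M)]
    rcases le_total (-M) y with h | h
    · rw [max_eq_right h, min_eq_left (by linarith)]; ring
    · rw [max_eq_left h, min_eq_right (by linarith)]; ring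

lemma sqrt_add_le {x y : ℝ} (hx : 0 ≤ x) (hy : 0 ≤ y) :
    Real.sqrt (x + y) ≤ Real.sqrt x + Real.sqrt y := by
  have h : x + y ≤ (Real.sqrt x + Real.sqrt y) ^ 2 := by
    nlinarith [Real.sq_sqrt hx, Real.sq_sqrt hy, Real.sqrt_nonneg x, Real.sqrt_nonneg y,
      mul_nonneg (Real.sqrt_nonneg x) (Real.sqrt_nonneg y)]
  calc Real.sqrt (x + y) ≤ Real.sqrt ((Real.sqrt x + Real.sqrt y) ^ 2) := Real.sqrt_le_sqrt h
    _ = Real.sqrt x + Real.sqrt y :=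
        Real.sqrt_sq (by positivity)

/-- decay lemma -/
lemma decay_bound (f g : ℝ → ℝ) (t₀ T c k : ℝ) (hk : 0 ≤ k) (hT : t₀ ≤ T)
    (hd : ∀ s ∈ Set.Icc t₀ T, HasDerivAt f (g s) s)
    (hneg : ∀ s ∈ Set.Icc t₀ T, c ≤ f s → g s ≤ -k) :
    f T ≤ max c (f t₀ - k * (T - t₀)) := by
  have hcont : ContinuousOn f (Set.Icc t₀ T) :=
    fun s hs => (hd s hs).continuousAt.continuousWithinAt
  have hG : ∀ s ∈ Set.Icc t₀ T, HasDerivAt (fun u => f u + k * u) (g s + k) s := by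
    intro s hs
    exact (hd s hs).add (by simpa using (hasDerivAt_id s).const_mul k)
  set S : Set ℝ := Set.Icc t₀ T ∩ f ⁻¹' Set.Iic c with hS
  by_cases hne : S.Nonempty
  · have hclosed : IsClosed S := hcont.preimage_isClosed_of_isClosed isClosed_Icc isClosed_Iic
    have hbdd : BddAbove S := BddAbove.mono Set.inter_subset_left bddAbove_Icc
    have hmem : sSup S ∈ S := hclosed.csSup_mem hne hbdd
    obtain ⟨⟨hu1, hu2⟩, hu3⟩ := hmem
    set u := sSup S
    have hanti : AntitoneOn (fun s => f s + k * s) (Set.Icc u T) := by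
      apply antitoneOn_of_deriv_nonpos (convex_Icc u T)
      · exact fun s hs => ((hG s ⟨le_trans hu1 hs.1, hs.2⟩).continuousAt).continuousWithinAt
      · rw [interior_Icc]
        exact fun s hs =>
          (hG s ⟨le_trans hu1 hs.1.le, hs.2.le⟩).differentiableAt.differentiableWithinAt
      · rw [interior_Icc]
        intro s hs
        have hsIcc : s ∈ Set.Icc t₀ T := ⟨le_trans hu1 hs.1.le, hs.2.le⟩
        rw [(hG s hsIcc).deriv]
        have hcf : c ≤ f s := by
          by_contra hcon
          push_neg at hcon
          have : s ∈ S := ⟨hsIcc, le_of_lt hcon⟩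
          exact absurd (le_csSup hbdd this) (not_le.2 hs.1)
        linarith [hneg s hsIcc hcf]
    have := hanti (Set.mem_Icc.2 ⟨le_rfl, hu2⟩) (Set.mem_Icc.2 ⟨hu2, le_rfl⟩) hu2
    simp only at this hu3
    have hu3' : f u ≤ c := hu3
    have hfT : f T ≤ c + k * (u - T) := by linarith
    have : f T ≤ c := by nlinarith
    exact le_trans this (le_max_left _ _)
  · have hgt : ∀ s ∈ Set.Icc t₀ T, c ≤ f s := by
      intro s hs
      by_contra hcon
      push_neg at hcon
      exact hne ⟨s, hs, le_of_lt hcon⟩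
    have hanti : AntitoneOn (fun s => f s + k * s) (Set.Icc t₀ T) := by
      apply antitoneOn_of_deriv_nonpos (convex_Icc t₀ T)
      · exact fun s hs => ((hG s hs).continuousAt).continuousWithinAt
      · rw [interior_Icc]
        exact fun s hs => (hG s ⟨hs.1.le, hs.2.le⟩).differentiableAt.differentiableWithinAt
      · rw [interior_Icc]
        intro s hs
        have hsIcc : s ∈ Set.Icc t₀ T := ⟨hs.1.le, hs.2.le⟩
        rw [(hG s hsIcc).deriv]
        linarith [hneg s hsIcc (hgt s hsIcc)]
    have := hanti (Set.mem_Icc.2 ⟨le_rfl, hT⟩) (Set.mem_Icc.2 ⟨hT, le_rfl⟩) hT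
    simp only at this
    have : f T ≤ f t₀ - k * (T - t₀) := by linarith
    exact le_trans this (le_max_right _ _)

/-- Gronwall-type lemma -/
lemma gronwall_bound (f g : ℝ → ℝ) (u T Vb η : ℝ) (hη : 0 ≤ η) (hu : u ≤ T)
    (hd : ∀ s ∈ Set.Icc u T, HasDerivAt f (g s) s)
    (hinv : ∀ s ∈ Set.Icc u T, Vb ≤ f s → g s ≤ 0)
    (hlin : ∀ s ∈ Set.Icc u T, f s ≤ Vb → g s ≤ -η * f s)
    (h0 : f u ≤ Vb) :
    f T ≤ f u * Real.exp (-(η * (T - u))) := by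
  have hstay : ∀ s ∈ Set.Icc u T, f s ≤ Vb := by
    intro s hs
    have := decay_bound f g u s Vb 0 le_rfl hs.1
      (fun x hx => hd x ⟨hx.1, le_trans hx.2 hs.2⟩)
      (fun x hx hfx => by simpa using hinv x ⟨hx.1, le_trans hx.2 hs.2⟩ hfx)
    simpa [max_eq_left h0] using this
  have hG : ∀ s ∈ Set.Icc u T,
      HasDerivAt (fun x => f x * Real.exp (η * x)) ((g s + η * f s) * Real.exp (η * s)) s := by
    intro s hs
    have he : HasDerivAt (fun x : ℝ => Real.exp (η * x)) (Real.exp (η * s) * η) s :=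
      (by simpa using (hasDerivAt_id s).const_mul η : HasDerivAt (fun x : ℝ => η * x) η s).exp
    have : HasDerivAt (fun x => f x * Real.exp (η * x)) _ s := (hd s hs).mul he
    convert this using 1
    ring
  have hanti : AntitoneOn (fun x => f x * Real.exp (η * x)) (Set.Icc u T) := by
    apply antitoneOn_of_deriv_nonpos (convex_Icc u T)
    · exact fun s hs => ((hG s hs).continuousAt).continuousWithinAt
    · rw [interior_Icc]
      exact fun s hs => (hG s ⟨hs.1.le, hs.2.le⟩).differentiableAt.differentiableWithinAt
    · rw [interior_Icc]
      intro s hs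
      have hsIcc : s ∈ Set.Icc u T := ⟨hs.1.le, hs.2.le⟩
      rw [(hG s hsIcc).deriv]
      have h1 : g s ≤ -η * f s := hlin s hsIcc (hstay s hsIcc)
      have h2 : (0:ℝ) < Real.exp (η * s) := Real.exp_pos _
      nlinarith
  have key := hanti (Set.mem_Icc.2 ⟨le_rfl, hu⟩) (Set.mem_Icc.2 ⟨hu, le_rfl⟩) hu
  simp only at key
  have h2 : (0:ℝ) < Real.exp (η * T) := Real.exp_pos _
  have := mul_le_mul_of_nonneg_right key (Real.exp_nonneg (-(η * T)))
  calc f T = f T * Real.exp (η * T) * Real.exp (-(η * T)) := by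
        rw [mul_assoc, ← Real.exp_add]; simp
    _ ≤ f u * Real.exp (η * u) * Real.exp (-(η * T)) := this
    _ = f u * Real.exp (-(η * (T - u))) := by rw [mul_assoc, ← Real.exp_add]; ring_nf




noncomputable def klfun (a b k η Vb : ℝ) : ℝ → ℝ → ℝ := fun s t =>
  Real.sqrt (max 0 (max (b * s ^ 2 - k * t)
    (min (b * s ^ 2) Vb * Real.exp (-(η * (t - b * s ^ 2 / k))))) / a) + s * Real.exp (-t)

lemma klfun_inner_mono (k η Vb : ℝ) (hk : 0 < k) (hη : 0 ≤ η) (hVb : 0 ≤ Vb)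
    {u₁ u₂ t : ℝ} (hu₁ : 0 ≤ u₁) (h12 : u₁ ≤ u₂) :
    max 0 (max (u₁ - k * t) (min u₁ Vb * Real.exp (-(η * (t - u₁ / k))))) ≤
    max 0 (max (u₂ - k * t) (min u₂ Vb * Real.exp (-(η * (t - u₂ / k))))) := by
  apply max_le_max le_rfl
  apply max_le_max (by linarith)
  apply mul_le_mul (min_le_min h12 le_rfl)
    (Real.exp_le_exp.2 (by
      have : u₁ / k ≤ u₂ / k := (div_le_div_iff_of_pos_right hk).2 h12
      nlinarith))
    (Real.exp_nonneg _) (le_min (le_trans hu₁ h12) hVb)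

lemma klfun_classKL (a b k η Vb : ℝ) (ha : 0 < a) (hb : 0 < b) (hk : 0 < k)
    (hη : 0 < η) (hVb : 0 ≤ Vb) : ClassKL (klfun a b k η Vb) := by
  constructor
  · intro t ht
    refine ⟨?_, ?_, ?_⟩
    · apply Continuous.continuousOn
      unfold klfun
      fun_prop
    · intro s₁ hs₁ s₂ hs₂ h12
      unfold klfun
      simp only
      have hss : s₁ ^ 2 ≤ s₂ ^ 2 := by nlinarith [Set.mem_Ici.1 hs₁]
      have hu : b * s₁ ^ 2 ≤ b * s₂ ^ 2 := mul_le_mul_of_nonneg_left hss hb.le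
      have h1 := klfun_inner_mono k η Vb hk hη.le hVb
        (u₁ := b * s₁ ^ 2) (u₂ := b * s₂ ^ 2) (t := t) (by positivity) hu
      have h3 : Real.sqrt (max 0 (max (b * s₁ ^ 2 - k * t)
            (min (b * s₁ ^ 2) Vb * Real.exp (-(η * (t - b * s₁ ^ 2 / k))))) / a) ≤
          Real.sqrt (max 0 (max (b * s₂ ^ 2 - k * t)
            (min (b * s₂ ^ 2) Vb * Real.exp (-(η * (t - b * s₂ ^ 2 / k))))) / a) :=
        Real.sqrt_le_sqrt ((div_le_div_iff_of_pos_right ha).2 h1)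
      have h2 : s₁ * Real.exp (-t) < s₂ * Real.exp (-t) :=
        mul_lt_mul_of_pos_right h12 (Real.exp_pos _)
      linarith
    · unfold klfun
      have ht' : (0:ℝ) ≤ t := ht
      have h0 : min (b * 0 ^ 2) Vb = 0 := by
        simp [min_eq_left hVb]
      have h1 : b * 0 ^ 2 - k * t ≤ (0:ℝ) := by nlinarith
      have h2 : max (0:ℝ) (max (b * 0 ^ 2 - k * t)
          (min (b * 0 ^ 2) Vb * Real.exp (-(η * (t - b * 0 ^ 2 / k))))) = 0 := by
        rw [h0, zero_mul, max_eq_right h1]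
        simp
      simp only [show ∀ f : ℝ → ℝ, (fun s => f s) 0 = f 0 from fun f => rfl]
      rw [h2]
      simp

  · intro s hs
    have hs' : (0:ℝ) ≤ s := hs
    constructor
    · intro t₁ ht₁ t₂ ht₂ h12
      unfold klfun
      have hcoef : 0 ≤ min (b * s ^ 2) Vb := le_min (by positivity) hVb
      have h1 : max 0 (max (b * s ^ 2 - k * t₂)
            (min (b * s ^ 2) Vb * Real.exp (-(η * (t₂ - b * s ^ 2 / k))))) ≤
          max 0 (max (b * s ^ 2 - k * t₁)
            (min (b * s ^ 2) Vb * Real.exp (-(η * (t₁ - b * s ^ 2 / k))))) := by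
        apply max_le_max le_rfl
        apply max_le_max (by nlinarith)
        exact mul_le_mul_of_nonneg_left (Real.exp_le_exp.2 (by nlinarith)) hcoef
      have h3 := Real.sqrt_le_sqrt ((div_le_div_iff_of_pos_right ha).2 h1)
      have h2 : s * Real.exp (-t₂) ≤ s * Real.exp (-t₁) :=
        mul_le_mul_of_nonneg_left (Real.exp_le_exp.2 (by linarith)) hs'
      linarith
    · -- tendsto 0
      set u := b * s ^ 2 with hu
      have hu0 : 0 ≤ u := by positivity
      set C := min u Vb * Real.exp (η * (u / k)) with hC
      have hC0 : 0 ≤ C := mul_nonneg (le_min hu0 hVb) (Real.exp_nonneg _)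
      have hupper : ∀ t : ℝ, klfun a b k η Vb s t ≤
          Real.sqrt ((max 0 (u - k * t) + C * Real.exp (-(η * t))) / a) + s * Real.exp (-t) := by
        intro t
        unfold klfun
        simp only [← hu]
        have hB : min u Vb * Real.exp (-(η * (t - u / k))) = C * Real.exp (-(η * t)) := by
          rw [hC, mul_assoc, ← Real.exp_add]; ring_nf
        rw [hB]
        have hBe : 0 ≤ C * Real.exp (-(η * t)) := mul_nonneg hC0 (Real.exp_nonneg _)
        have : max 0 (max (u - k * t) (C * Real.exp (-(η * t)))) ≤
            max 0 (u - k * t) + C * Real.exp (-(η * t)) := by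
          apply max_le (add_nonneg (le_max_left _ _) hBe)
          apply max_le
          · linarith [le_max_right (0:ℝ) (u - k*t), le_max_left (0:ℝ) (u - k*t)]
          · linarith [le_max_left (0:ℝ) (u - k*t)]
        have hs3 := Real.sqrt_le_sqrt ((div_le_div_iff_of_pos_right ha).2 this)
        linarith
      have hlower : ∀ t : ℝ, 0 ≤ klfun a b k η Vb s t := by
        intro t
        unfold klfun
        have := Real.sqrt_nonneg (max 0 (max (b * s ^ 2 - k * t)
          (min (b * s ^ 2) Vb * Real.exp (-(η * (t - b * s ^ 2 / k))))) / a)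
        have h2 : 0 ≤ s * Real.exp (-t) := mul_nonneg hs' (Real.exp_nonneg _)
        linarith
      -- upper bound tends to 0
      have t1 : Filter.Tendsto (fun t : ℝ => max 0 (u - k * t)) Filter.atTop (nhds 0) := by
        apply Filter.Tendsto.congr' _ tendsto_const_nhds
        filter_upwards [Filter.eventually_ge_atTop (u / k)] with t htk
        have : u - k * t ≤ 0 := by
          have := (div_le_iff₀ hk).1 htk
          nlinarith
        rw [max_eq_left this]
      have t2 : Filter.Tendsto (fun t : ℝ => C * Real.exp (-(η * t))) Filter.atTop (nhds 0) := by
        have hexp : Filter.Tendsto (fun t : ℝ => Real.exp (-(η * t))) Filter.atTop (nhds 0) := by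
          have h1 : Filter.Tendsto (fun t : ℝ => -(η * t)) Filter.atTop Filter.atBot := by
            apply Filter.tendsto_neg_atBot_iff.2
            exact Filter.Tendsto.const_mul_atTop hη Filter.tendsto_id
          exact Real.tendsto_exp_atBot.comp h1
        simpa using hexp.const_mul C
      have t3 : Filter.Tendsto (fun t : ℝ => Real.sqrt ((max 0 (u - k * t) +
          C * Real.exp (-(η * t))) / a) + s * Real.exp (-t)) Filter.atTop (nhds 0) := by
        have hsum : Filter.Tendsto (fun t : ℝ => (max 0 (u - k * t) +
            C * Real.exp (-(η * t))) / a) Filter.atTop (nhds 0) := by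
          have := (t1.add t2).div_const a
          simpa using this
        have hsqrt := (Real.continuous_sqrt.tendsto 0).comp hsum
        have hsexp : Filter.Tendsto (fun t : ℝ => s * Real.exp (-t)) Filter.atTop (nhds 0) := by
          have : Filter.Tendsto (fun t : ℝ => Real.exp (-t)) Filter.atTop (nhds 0) :=
            Real.tendsto_exp_atBot.comp (Filter.tendsto_neg_atBot_iff.2 Filter.tendsto_id)
          simpa using this.const_mul s
        have := hsqrt.add hsexp
        simpa using this
      exact tendsto_of_tendsto_of_tendsto_of_le_of_le tendsto_const_nhds t3
        (fun t => hlower t) (fun t => hupper t)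

set_option maxHeartbeats 2000000 in
/-- Theorem 4 of the paper: input-to-state stability of the reduced class-B
GFC + SG system `2H ω̇ = P - sat_M(d_c ω) + w(t)`, `τ Ṗ = -P - d_g ω` under a
bounded load disturbance `sup_{t ≥ t₀} |w t| ≤ w̄ < θM`, with explicit ISS gain
`γ(r) = √(λ_max/λ_min)·max(χ₁(r), χ₂(r))`. -/
theorem stmt14 (H τ dg dc M θ t₀ wbar : ℝ) (hH : 0 < H) (hτ : 0 < τ)
    (hdg : 0 < dg) (hdc : 0 < dc) (hM : 0 < M) (hθ0 : 0 < θ) (hθ1 : θ < 1)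
    (hwbar0 : 0 ≤ wbar) (hwbar : wbar < θ * M)
    (χ₁ χ₂ γ : ℝ → ℝ)
    (hχ₁ : ∀ r, χ₁ r = (M / dc) * artanh (r / (θ * M)))
    (hχ₂ : ∀ r, χ₂ r = Real.sqrt (r * dg * χ₁ r / θ))
    (hγ : ∀ r, γ r = Real.sqrt (max H (τ / (2 * dg)) / min H (τ / (2 * dg)))
      * max (χ₁ r) (χ₂ r))
    (w : ℝ → ℝ) (hwcont : Continuous w) (hwb : ∀ t ≥ t₀, |w t| ≤ wbar) :
    ∃ β : ℝ → ℝ → ℝ, ClassKL β ∧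
      ∀ ω P : ℝ → ℝ,
        (∀ t ≥ t₀, HasDerivAt ω ((P t - sat M (dc * ω t) + w t) / (2 * H)) t) →
        (∀ t ≥ t₀, HasDerivAt P ((-P t - dg * ω t) / τ) t) →
        ∀ t ≥ t₀,
          Real.sqrt ((ω t) ^ 2 + (P t) ^ 2) ≤
            β (Real.sqrt ((ω t₀) ^ 2 + (P t₀) ^ 2)) (t - t₀) + γ wbar := by
  have hγw := hγ wbar
  set aa := min H (τ / (2 * dg)) with haadef
  set bb := max H (τ / (2 * dg)) with hbbdef
  have haa : 0 < aa := lt_min hH (by positivity)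
  have hbb : 0 < bb := lt_of_lt_of_le haa min_le_max
  have haaH : aa ≤ H := min_le_left _ _
  have haaτ : aa ≤ τ / (2 * dg) := min_le_right _ _
  have hbbH : H ≤ bb := le_max_left _ _
  have hbbτ : τ / (2 * dg) ≤ bb := le_max_right _ _
  rcases hwbar0.eq_or_lt with hw0 | hwpos
  · -- case wbar = 0
    subst hw0
    have hw0f : ∀ s, t₀ ≤ s → w s = 0 := fun s hs =>
      abs_eq_zero.mp (le_antisymm (hwb s hs) (abs_nonneg _))
    have hx10 : χ₁ 0 = 0 := by rw [hχ₁]; simp [artanh]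
    have hx20 : χ₂ 0 = 0 := by rw [hχ₂, hx10]; simp
    have hγ0 : γ 0 = 0 := by rw [hγw, hx10, hx20]; simp
    set Vb := H * (M / dc) ^ 2 with hVbdef
    have hVbpos : 0 < Vb := by positivity
    set κ := min (M ^ 2 / (2 * dc)) (Vb / τ) with hκdef
    have hκpos : 0 < κ := lt_min (by positivity) (by positivity)
    set η := min (dc / H) (2 / τ) with hηdef
    have hηpos : 0 < η := lt_min (by positivity) (by positivity)
    refine ⟨klfun aa bb κ η Vb, klfun_classKL aa bb κ η Vb haa hbb hκpos hηpos hVbpos.le, ?_⟩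
    intro ω P hω hP t htt
    set φ := fun s => -(ω s * sat M (dc * ω s)) + ω s * w s - P s ^ 2 / dg with hφdef
    set f := fun u => H * ω u ^ 2 + τ / (2 * dg) * P u ^ 2 with hfdef
    have hfd : ∀ s ≥ t₀, HasDerivAt f (φ s) s :=
      traj_deriv H τ dg dc M t₀ hH hτ hdg w ω P hω hP
    have hkey1 : ∀ s, t₀ ≤ s → Vb ≤ f s → φ s ≤ -κ := by
      intro s hs hc
      set r := |ω s| with hrdef
      have hrnn : 0 ≤ r := abs_nonneg _
      set smin := min (dc * r) M with hsmdef
      have hsm0 : 0 ≤ smin := le_min (by positivity) hM.le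
      have hωsat : ω s * sat M (dc * ω s) = r * smin := by
        have h := mul_sat hM (dc * ω s)
        have habs : |dc * ω s| = dc * r := by rw [abs_mul, abs_of_pos hdc]
        have h2 : dc * (ω s * sat M (dc * ω s)) = dc * (r * smin) := by
          calc dc * (ω s * sat M (dc * ω s)) = dc * ω s * sat M (dc * ω s) := by ring
            _ = |dc * ω s| * min |dc * ω s| M := h
            _ = dc * (r * smin) := by rw [habs, hsmdef]; ring
        exact mul_left_cancel₀ (ne_of_gt hdc) h2
      have hr2 : ω s ^ 2 = r ^ 2 := (sq_abs _).symm
      have hfs : Vb ≤ H * r ^ 2 + τ / (2 * dg) * P s ^ 2 := by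
        simp only [hfdef] at hc; rw [← hr2]; exact hc
      have hQnn : 0 ≤ P s ^ 2 := sq_nonneg _
      simp only [hφdef]
      rw [hωsat, hw0f s hs, mul_zero]
      suffices hmain : κ ≤ r * smin + P s ^ 2 / dg by linarith only [hmain]
      by_cases hhalf : Vb / 2 ≤ H * r ^ 2
      · have hr2b : (M / dc) ^ 2 / 2 ≤ r ^ 2 := by
          have e : H * ((M / dc) ^ 2 / 2) = Vb / 2 := by rw [hVbdef]; ring
          rw [← e] at hhalf
          exact le_of_mul_le_mul_left hhalf hH
        have hQd : (0:ℝ) ≤ P s ^ 2 / dg := by positivity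
        have hrs : M ^ 2 / (2 * dc) ≤ r * smin := by
          rcases le_total (dc * r) M with hm | hm
          · rw [hsmdef, min_eq_left hm]
            have e : dc * ((M / dc) ^ 2 / 2) = M ^ 2 / (2 * dc) := by
              field_simp
            calc M ^ 2 / (2 * dc) = dc * ((M / dc) ^ 2 / 2) := e.symm
              _ ≤ dc * r ^ 2 := mul_le_mul_of_nonneg_left hr2b hdc.le
              _ = r * (dc * r) := by ring
          · rw [hsmdef, min_eq_right hm]
            have hrMdc : M / dc ≤ r := by
              rw [div_le_iff₀ hdc]; linarith only [hm]
            have e2 : M ^ 2 / (2 * dc) ≤ M ^ 2 / dc :=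
              div_le_div_of_nonneg_left (by positivity) hdc (by linarith only [hdc])
            have e3 : (M / dc) * M = M ^ 2 / dc := by field_simp
            calc M ^ 2 / (2 * dc) ≤ M ^ 2 / dc := e2
              _ = (M / dc) * M := e3.symm
              _ ≤ r * M := mul_le_mul_of_nonneg_right hrMdc hM.le
        calc κ ≤ M ^ 2 / (2 * dc) := min_le_left _ _
          _ ≤ r * smin := hrs
          _ ≤ r * smin + P s ^ 2 / dg := le_add_of_nonneg_right hQd
      · push_neg at hhalf
        have h1 : Vb / 2 ≤ τ / (2 * dg) * P s ^ 2 := by linarith only [hfs, hhalf.le]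
        have h2 : Vb / τ ≤ P s ^ 2 / dg := by
          rw [div_le_div_iff₀ hτ hdg]
          have h2a := mul_le_mul_of_nonneg_left h1 (by positivity : (0:ℝ) ≤ 2 * dg)
          calc Vb * dg = 2 * dg * (Vb / 2) := by ring
            _ ≤ 2 * dg * (τ / (2 * dg) * P s ^ 2) := h2a
            _ = P s ^ 2 * τ := by field_simp
        have h3 : 0 ≤ r * smin := mul_nonneg hrnn hsm0
        calc κ ≤ Vb / τ := min_le_right _ _
          _ ≤ P s ^ 2 / dg := h2
          _ ≤ r * smin + P s ^ 2 / dg := by linarith only [h3]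
    have hkey2 : ∀ s, t₀ ≤ s → f s ≤ Vb → φ s ≤ -η * f s := by
      intro s hs hc
      have hP2 : (0:ℝ) ≤ τ / (2 * dg) * P s ^ 2 := by positivity
      have hc' : H * ω s ^ 2 ≤ H * (M / dc) ^ 2 := by
        simp only [hfdef] at hc; rw [hVbdef] at hc; linarith only [hc, hP2]
      have hω2 : ω s ^ 2 ≤ (M / dc) ^ 2 := le_of_mul_le_mul_left hc' hH
      have hωabs : |ω s| ≤ M / dc := by
        have h := Real.sqrt_le_sqrt hω2
        rwa [Real.sqrt_sq_eq_abs, Real.sqrt_sq (by positivity)] at h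
      have hsat : sat M (dc * ω s) = dc * ω s := by
        have ha1 := (abs_le.1 hωabs).1
        have ha2 := (abs_le.1 hωabs).2
        have h1 : dc * ω s ≤ M := by
          calc dc * ω s ≤ dc * (M / dc) := mul_le_mul_of_nonneg_left ha2 hdc.le
            _ = M := by field_simp
        have h2 : -M ≤ dc * ω s := by
          have h2a := mul_le_mul_of_nonneg_left ha1 hdc.le
          calc -M = dc * (-(M / dc)) := by field_simp
            _ ≤ dc * ω s := h2a
        unfold sat
        rw [min_eq_left h1, max_eq_right h2]
      simp only [hφdef, hfdef]
      rw [hsat, hw0f s hs, mul_zero]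
      have e1 : η * (H * ω s ^ 2) ≤ dc * ω s ^ 2 := by
        calc η * (H * ω s ^ 2) ≤ (dc / H) * (H * ω s ^ 2) :=
              mul_le_mul_of_nonneg_right (min_le_left _ _) (by positivity)
          _ = dc * ω s ^ 2 := by field_simp
      have e2 : η * (τ / (2 * dg) * P s ^ 2) ≤ P s ^ 2 / dg := by
        calc η * (τ / (2 * dg) * P s ^ 2) ≤ (2 / τ) * (τ / (2 * dg) * P s ^ 2) :=
              mul_le_mul_of_nonneg_right (min_le_right _ _) (by positivity)
          _ = P s ^ 2 / dg := by field_simp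
      linarith only [e1, e2]
    have hdall : ∀ x ∈ Set.Icc t₀ t, HasDerivAt f (φ x) x := fun x hx => hfd x hx.1
    set V₀ := f t₀ with hV₀def
    have hV₀nn : 0 ≤ V₀ := by rw [hV₀def]; simp only [hfdef]; positivity
    have hbound : f t ≤ max (V₀ - κ * (t - t₀))
        (min V₀ Vb * Real.exp (-(η * ((t - t₀) - V₀ / κ)))) := by
      by_cases hcase : V₀ ≤ Vb
      · have hg := gronwall_bound f φ t₀ t Vb η hηpos.le htt hdall
          (fun x hx hfx => le_trans (hkey1 x hx.1 hfx) (by linarith only [hκpos]))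
          (fun x hx hfx => hkey2 x hx.1 hfx) hcase
        refine le_trans hg (le_trans ?_ (le_max_right _ _))
        rw [min_eq_left hcase]
        apply mul_le_mul_of_nonneg_left (Real.exp_le_exp.2 ?_) hV₀nn
        have h6 : 0 ≤ η * (V₀ / κ) := by positivity
        linarith only [h6]
      · push_neg at hcase
        have hT₁eq : κ * ((V₀ - Vb) / κ) = V₀ - Vb := by field_simp
        by_cases hsmall : t ≤ t₀ + (V₀ - Vb) / κ
        · have hdec2 := decay_bound f φ t₀ t Vb κ hκpos.le htt hdall
            (fun x hx hfx => hkey1 x hx.1 hfx)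
          refine le_trans hdec2 (le_trans ?_ (le_max_left _ _))
          apply max_le
          · have h7 : κ * (t - t₀) ≤ κ * ((V₀ - Vb) / κ) :=
              mul_le_mul_of_nonneg_left (by linarith only [hsmall]) hκpos.le
            rw [hT₁eq] at h7
            linarith only [h7]
          · exact le_rfl
        · push_neg at hsmall
          set t₁ := t₀ + (V₀ - Vb) / κ with ht₁def
          have hT₁nn : 0 ≤ (V₀ - Vb) / κ := div_nonneg (by linarith only [hcase]) hκpos.le
          have ht₁ge : t₀ ≤ t₁ := by rw [ht₁def]; linarith only [hT₁nn]
          have ht₁t : t₁ ≤ t := hsmall.le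
          have hft₁ : f t₁ ≤ Vb := by
            have hdec3 := decay_bound f φ t₀ t₁ Vb κ hκpos.le ht₁ge
              (fun x hx => hfd x hx.1)
              (fun x hx hfx => hkey1 x hx.1 hfx)
            refine le_trans hdec3 (max_le le_rfl ?_)
            have e9 : t₁ - t₀ = (V₀ - Vb) / κ := by rw [ht₁def]; ring
            rw [e9, hT₁eq]
            linarith only []
          have hg := gronwall_bound f φ t₁ t Vb η hηpos.le ht₁t
            (fun x hx => hfd x (le_trans ht₁ge hx.1))
            (fun x hx hfx =>
              le_trans (hkey1 x (le_trans ht₁ge hx.1) hfx) (by linarith only [hκpos]))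
            (fun x hx hfx => hkey2 x (le_trans ht₁ge hx.1) hfx) hft₁
          refine le_trans hg (le_trans ?_ (le_max_right _ _))
          rw [min_eq_right hcase.le]
          have hstep1 : f t₁ * Real.exp (-(η * (t - t₁))) ≤ Vb * Real.exp (-(η * (t - t₁))) :=
            mul_le_mul_of_nonneg_right hft₁ (Real.exp_nonneg _)
          have hstep2 : Vb * Real.exp (-(η * (t - t₁))) ≤
              Vb * Real.exp (-(η * ((t - t₀) - V₀ / κ))) := by
            apply mul_le_mul_of_nonneg_left (Real.exp_le_exp.2 ?_) hVbpos.le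
            have h8 : (V₀ - Vb) / κ ≤ V₀ / κ :=
              (div_le_div_iff_of_pos_right hκpos).2 (by linarith only [hVbpos])
            have h9 : t - t₁ = (t - t₀) - (V₀ - Vb) / κ := by rw [ht₁def]; ring
            rw [h9]
            have h10 := mul_le_mul_of_nonneg_left h8 hηpos.le
            linarith only [h10]
          exact le_trans hstep1 hstep2
    set s₀ := Real.sqrt (ω t₀ ^ 2 + P t₀ ^ 2) with hs₀def
    have hs₀nn : 0 ≤ s₀ := Real.sqrt_nonneg _
    have hs₀sq : s₀ ^ 2 = ω t₀ ^ 2 + P t₀ ^ 2 := Real.sq_sqrt (by positivity)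
    have hft0 : V₀ ≤ bb * s₀ ^ 2 := by
      rw [hV₀def, hs₀sq]; simp only [hfdef]
      calc H * ω t₀ ^ 2 + τ / (2 * dg) * P t₀ ^ 2
          ≤ bb * ω t₀ ^ 2 + bb * P t₀ ^ 2 :=
            add_le_add (mul_le_mul_of_nonneg_right hbbH (sq_nonneg _))
              (mul_le_mul_of_nonneg_right hbbτ (sq_nonneg _))
        _ = bb * (ω t₀ ^ 2 + P t₀ ^ 2) := by ring
    have hlow : aa * (ω t ^ 2 + P t ^ 2) ≤ f t := by
      simp only [hfdef]
      calc aa * (ω t ^ 2 + P t ^ 2) = aa * ω t ^ 2 + aa * P t ^ 2 := by ring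
        _ ≤ H * ω t ^ 2 + τ / (2 * dg) * P t ^ 2 :=
            add_le_add (mul_le_mul_of_nonneg_right haaH (sq_nonneg _))
              (mul_le_mul_of_nonneg_right haaτ (sq_nonneg _))
    have hU0 : (0:ℝ) ≤ bb * s₀ ^ 2 := by positivity
    set E := max 0 (max (bb * s₀ ^ 2 - κ * (t - t₀))
      (min (bb * s₀ ^ 2) Vb * Real.exp (-(η * ((t - t₀) - bb * s₀ ^ 2 / κ))))) with hEdef
    have hmono : max (V₀ - κ * (t - t₀))
        (min V₀ Vb * Real.exp (-(η * ((t - t₀) - V₀ / κ)))) ≤ E := by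
      rw [hEdef]
      refine le_trans (max_le_max
        (by linarith only [hft0] : V₀ - κ * (t - t₀) ≤ bb * s₀ ^ 2 - κ * (t - t₀)) ?_)
        (le_max_right _ _)
      refine mul_le_mul (min_le_min hft0 le_rfl) (Real.exp_le_exp.2 ?_)
        (Real.exp_nonneg _) (le_min hU0 hVbpos.le)
      have h12 : V₀ / κ ≤ bb * s₀ ^ 2 / κ := (div_le_div_iff_of_pos_right hκpos).2 hft0
      have h11 := mul_le_mul_of_nonneg_left h12 hηpos.le
      linarith only [h11]
    have hinner : f t ≤ E := le_trans hbound hmono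
    have hsq1 : ω t ^ 2 + P t ^ 2 ≤ E / aa := by
      rw [le_div_iff₀ haa]
      linarith only [hlow, hinner]
    have hsq2 := Real.sqrt_le_sqrt hsq1
    have hkl : klfun aa bb κ η Vb s₀ (t - t₀) =
        Real.sqrt (E / aa) + s₀ * Real.exp (-(t - t₀)) := rfl
    have hexps : 0 ≤ s₀ * Real.exp (-(t - t₀)) := mul_nonneg hs₀nn (Real.exp_nonneg _)
    rw [hγ0, hkl]
    linarith only [hsq2, hexps]
  · -- case wbar > 0
    have huM : (0:ℝ) < θ * M := by positivity
    have hu1 : wbar / (θ * M) < 1 := (div_lt_one huM).2 hwbar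
    have hu0 : 0 ≤ wbar / (θ * M) := by positivity
    have hart := le_artanh hu0 hu1
    have hX1pos : 0 < χ₁ wbar := by
      rw [hχ₁]
      have h1 : 0 < wbar / (θ * M) := by positivity
      have h2 : 0 < artanh (wbar / (θ * M)) := lt_of_lt_of_le h1 hart
      positivity
    have hX2nn : 0 ≤ χ₂ wbar := by rw [hχ₂]; exact Real.sqrt_nonneg _
    have hX2sq : (χ₂ wbar) ^ 2 = wbar * dg * χ₁ wbar / θ := by
      rw [hχ₂]; exact Real.sq_sqrt (by positivity)
    have hX2pos : 0 < (χ₂ wbar) ^ 2 := by rw [hX2sq]; positivity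
    have hkeyid : dg * wbar * χ₁ wbar = θ * (χ₂ wbar) ^ 2 := by
      rw [hX2sq, mul_comm θ, div_mul_cancel₀ _ (ne_of_gt hθ0)]; ring
    set m := max (χ₁ wbar) (χ₂ wbar) with hmdef
    have hm1 : χ₁ wbar ≤ m := le_max_left _ _
    have hm2 : χ₂ wbar ≤ m := le_max_right _ _
    have hmpos : 0 < m := lt_of_lt_of_le hX1pos hm1
    have hm1sq : (χ₁ wbar) ^ 2 ≤ m ^ 2 := by nlinarith [hX1pos.le]
    have hm2sq : (χ₂ wbar) ^ 2 ≤ m ^ 2 := by nlinarith [hX2nn]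
    have h1θ : 0 < 1 - θ := by linarith
    set κ := (1 - θ) * (χ₂ wbar) ^ 2 / dg with hκdef
    have hκpos : 0 < κ := div_pos (mul_pos h1θ hX2pos) hdg
    have hdcX1 : wbar / θ ≤ dc * χ₁ wbar := by
      have e1 : dc * χ₁ wbar = M * artanh (wbar / (θ * M)) := by
        rw [hχ₁]; field_simp
      rw [e1]
      calc wbar / θ = M * (wbar / (θ * M)) := by field_simp
        _ ≤ M * artanh (wbar / (θ * M)) := mul_le_mul_of_nonneg_left hart hM.le
    have hwθM : wbar / θ < M := by rw [div_lt_iff₀ hθ0]; linarith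
    refine ⟨klfun aa bb κ 1 0, klfun_classKL aa bb κ 1 0 haa hbb hκpos one_pos le_rfl, ?_⟩
    intro ω P hω hP t htt
    set φ := fun s => -(ω s * sat M (dc * ω s)) + ω s * w s - P s ^ 2 / dg with hφdef
    set f := fun u => H * ω u ^ 2 + τ / (2 * dg) * P u ^ 2 with hfdef
    have hfd : ∀ s ≥ t₀, HasDerivAt f (φ s) s :=
      traj_deriv H τ dg dc M t₀ hH hτ hdg w ω P hω hP
    have hkey : ∀ s ∈ Set.Icc t₀ t, bb * m ^ 2 ≤ f s → φ s ≤ -κ := by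
      intro s hs hc
      have hst₀ : t₀ ≤ s := hs.1
      set r := |ω s| with hrdef
      have hrnn : 0 ≤ r := abs_nonneg _
      set smin := min (dc * r) M with hsmdef
      have hsm0 : 0 ≤ smin := le_min (by positivity) hM.le
      have hωsat : ω s * sat M (dc * ω s) = r * smin := by
        have h := mul_sat hM (dc * ω s)
        have habs : |dc * ω s| = dc * r := by rw [abs_mul, abs_of_pos hdc]
        have h2 : dc * (ω s * sat M (dc * ω s)) = dc * (r * smin) := by
          calc dc * (ω s * sat M (dc * ω s)) = dc * ω s * sat M (dc * ω s) := by ring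
            _ = |dc * ω s| * min |dc * ω s| M := h
            _ = dc * (r * smin) := by rw [habs, hsmdef]; ring
        exact mul_left_cancel₀ (ne_of_gt hdc) h2
      have hωw : ω s * w s ≤ r * wbar := by
        calc ω s * w s ≤ |ω s * w s| := le_abs_self _
          _ = r * |w s| := by rw [abs_mul]
          _ ≤ r * wbar := mul_le_mul_of_nonneg_left (hwb s hst₀) hrnn
      have hQnn : 0 ≤ P s ^ 2 := sq_nonneg _
      have hr2 : ω s ^ 2 = r ^ 2 := (sq_abs _).symm
      suffices hmain : κ ≤ r * smin - r * wbar + P s ^ 2 / dg by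
        simp only [hφdef]
        rw [hωsat]
        linarith only [hmain, hωw]
      have hdiv : ∀ X : ℝ, θ * dg * κ ≤ θ * dg * X → κ ≤ X := by
        intro X h
        exact le_of_mul_le_mul_left h (by positivity)
      apply hdiv
      have e2 : θ * dg * (r * smin - r * wbar + P s ^ 2 / dg) =
          θ * dg * (r * smin) - θ * dg * (r * wbar) + θ * P s ^ 2 := by
        field_simp
      have e1 : θ * dg * κ = (1 - θ) * θ * (χ₂ wbar) ^ 2 := by
        rw [hκdef]; field_simp
      rw [e1, e2]
      by_cases hrX : χ₁ wbar ≤ r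
      · have hsmin : wbar / θ ≤ smin := by
          apply le_min
          · exact le_trans hdcX1 (mul_le_mul_of_nonneg_left hrX hdc.le)
          · exact hwθM.le
        have hθds : wbar ≤ smin * θ := (div_le_iff₀ hθ0).1 hsmin
        have h1 : dg * r * wbar ≤ dg * r * (smin * θ) :=
          mul_le_mul_of_nonneg_left hθds (by positivity)
        have h2 : (1 - θ) * dg * wbar * (χ₁ wbar) ≤ (1 - θ) * dg * wbar * r :=
          mul_le_mul_of_nonneg_left hrX
            (mul_nonneg (mul_nonneg h1θ.le hdg.le) hwpos.le)
        have h3 : (1 - θ) * (dg * wbar * χ₁ wbar) = (1 - θ) * (θ * χ₂ wbar ^ 2) := by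
          rw [hkeyid]
        have h4 : 0 ≤ θ * P s ^ 2 := mul_nonneg hθ0.le hQnn
        linarith only [h1, h2, h3, h4]
      · push_neg at hrX
        have hA : wbar * r ≤ θ * (χ₁ wbar * smin) := by
          rcases le_total (dc * r) M with hms | hms
          · rw [hsmdef, min_eq_left hms]
            have hw1 : wbar ≤ dc * χ₁ wbar * θ := (div_le_iff₀ hθ0).1 hdcX1
            calc wbar * r ≤ dc * χ₁ wbar * θ * r := mul_le_mul_of_nonneg_right hw1 hrnn
              _ = θ * (χ₁ wbar * (dc * r)) := by ring
          · rw [hsmdef, min_eq_right hms]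
            calc wbar * r ≤ (θ * M) * r := mul_le_mul_of_nonneg_right hwbar.le hrnn
              _ ≤ (θ * M) * χ₁ wbar := mul_le_mul_of_nonneg_left hrX.le (by positivity)
              _ = θ * (χ₁ wbar * M) := by ring
        have hfs : bb * m ^ 2 ≤ H * r ^ 2 + τ / (2 * dg) * P s ^ 2 := by
          simp only [hfdef] at hc
          rw [← hr2]; exact hc
        have hrm : r ≤ m := le_trans hrX.le hm1
        have hr2m : r ^ 2 ≤ m ^ 2 := by
          have := pow_le_pow_left₀ hrnn hrm 2
          linarith only [this]
        have hQm : m ^ 2 - r ^ 2 ≤ P s ^ 2 := by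
          have h1 : τ / (2 * dg) * (m ^ 2 - r ^ 2) ≤ bb * (m ^ 2 - r ^ 2) :=
            mul_le_mul_of_nonneg_right hbbτ (by linarith only [hr2m])
          have h2 : bb * (m ^ 2 - r ^ 2) ≤ bb * m ^ 2 - H * r ^ 2 := by
            have h2a : H * r ^ 2 ≤ bb * r ^ 2 := mul_le_mul_of_nonneg_right hbbH (sq_nonneg r)
            linarith only [h2a]
          have h3 : τ / (2 * dg) * (m ^ 2 - r ^ 2) ≤ τ / (2 * dg) * P s ^ 2 := by
            linarith only [h1, h2, hfs]
          exact le_of_mul_le_mul_left h3 (by positivity)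
        have hTχ : (χ₁ wbar) ^ 2 * ((θ * dg * (r * smin) - θ * dg * (r * wbar) + θ * P s ^ 2)
              - (1 - θ) * θ * (χ₂ wbar) ^ 2) =
            dg * r * (χ₁ wbar) * (θ * (χ₁ wbar * smin) - wbar * r)
            + θ * (χ₁ wbar) ^ 2 * (P s ^ 2 - (m ^ 2 - r ^ 2))
            + θ * ((m ^ 2 - (χ₂ wbar) ^ 2) * ((χ₁ wbar) ^ 2 - r ^ 2)
              + (m ^ 2 - (χ₁ wbar) ^ 2) * r ^ 2
              + θ * (χ₂ wbar) ^ 2 * (χ₁ wbar) * (χ₁ wbar - r)) := by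
          linear_combination (r ^ 2 - θ * (χ₁ wbar) * r) * hkeyid
        have t1 : 0 ≤ dg * r * (χ₁ wbar) * (θ * (χ₁ wbar * smin) - wbar * r) :=
          mul_nonneg (by positivity) (by linarith only [hA])
        have t2 : 0 ≤ θ * (χ₁ wbar) ^ 2 * (P s ^ 2 - (m ^ 2 - r ^ 2)) :=
          mul_nonneg (by positivity) (by linarith only [hQm])
        have hrx2 : r ^ 2 ≤ (χ₁ wbar) ^ 2 := by
          have := pow_le_pow_left₀ hrnn hrX.le 2
          linarith only [this]
        have c1 : 0 ≤ (m ^ 2 - (χ₂ wbar) ^ 2) * ((χ₁ wbar) ^ 2 - r ^ 2) :=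
          mul_nonneg (by linarith only [hm2sq]) (by linarith only [hrx2])
        have c2 : 0 ≤ (m ^ 2 - (χ₁ wbar) ^ 2) * r ^ 2 :=
          mul_nonneg (by linarith only [hm1sq]) (sq_nonneg r)
        have c3 : 0 ≤ θ * (χ₂ wbar) ^ 2 * (χ₁ wbar) * (χ₁ wbar - r) :=
          mul_nonneg (by positivity) (by linarith only [hrX.le])
        have hT2 : 0 ≤ (χ₁ wbar) ^ 2 * ((θ * dg * (r * smin) - θ * dg * (r * wbar) + θ * P s ^ 2)
            - (1 - θ) * θ * (χ₂ wbar) ^ 2) := by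
          rw [hTχ]
          have := mul_nonneg hθ0.le (by linarith only [c1, c2, c3] : (0:ℝ) ≤ (m ^ 2 - (χ₂ wbar) ^ 2) * ((χ₁ wbar) ^ 2 - r ^ 2)
            + (m ^ 2 - (χ₁ wbar) ^ 2) * r ^ 2 + θ * (χ₂ wbar) ^ 2 * (χ₁ wbar) * (χ₁ wbar - r))
          linarith only [t1, t2, this]
        have hT3 : (χ₁ wbar) ^ 2 * 0 ≤ (χ₁ wbar) ^ 2 * ((θ * dg * (r * smin) - θ * dg * (r * wbar)
            + θ * P s ^ 2) - (1 - θ) * θ * (χ₂ wbar) ^ 2) := by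
          rw [mul_zero]; exact hT2
        have hT4 := (mul_le_mul_iff_right₀ (pow_pos hX1pos 2)).1 hT3
        linarith only [hT4]
    have hdec := decay_bound f φ t₀ t (bb * m ^ 2) κ hκpos.le htt (fun s hs => hfd s hs.1) hkey
    set s₀ := Real.sqrt (ω t₀ ^ 2 + P t₀ ^ 2) with hs₀def
    have hs₀nn : 0 ≤ s₀ := Real.sqrt_nonneg _
    have hs₀sq : s₀ ^ 2 = ω t₀ ^ 2 + P t₀ ^ 2 := Real.sq_sqrt (by positivity)
    have hft0 : f t₀ ≤ bb * s₀ ^ 2 := by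
      rw [hs₀sq]; simp only [hfdef]
      calc H * ω t₀ ^ 2 + τ / (2 * dg) * P t₀ ^ 2
          ≤ bb * ω t₀ ^ 2 + bb * P t₀ ^ 2 :=
            add_le_add (mul_le_mul_of_nonneg_right hbbH (sq_nonneg _))
              (mul_le_mul_of_nonneg_right hbbτ (sq_nonneg _))
        _ = bb * (ω t₀ ^ 2 + P t₀ ^ 2) := by ring
    have hlow : aa * (ω t ^ 2 + P t ^ 2) ≤ f t := by
      simp only [hfdef]
      calc aa * (ω t ^ 2 + P t ^ 2) = aa * ω t ^ 2 + aa * P t ^ 2 := by ring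
        _ ≤ H * ω t ^ 2 + τ / (2 * dg) * P t ^ 2 :=
            add_le_add (mul_le_mul_of_nonneg_right haaH (sq_nonneg _))
              (mul_le_mul_of_nonneg_right haaτ (sq_nonneg _))
    set D := max 0 (bb * s₀ ^ 2 - κ * (t - t₀)) with hDdef
    have hDnn : 0 ≤ D := le_max_left _ _
    have hbm2 : (0:ℝ) ≤ bb * m ^ 2 := by positivity
    have hft : f t ≤ bb * m ^ 2 + D := by
      apply le_trans hdec
      apply max_le (le_add_of_nonneg_right hDnn)
      have h2 : bb * s₀ ^ 2 - κ * (t - t₀) ≤ D := le_max_right _ _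
      linarith only [h2, hft0, hbm2]
    have hsq1 : ω t ^ 2 + P t ^ 2 ≤ (bb * m ^ 2 + D) / aa := by
      rw [le_div_iff₀ haa]
      linarith only [hlow, hft]
    have hsq2 : Real.sqrt (ω t ^ 2 + P t ^ 2) ≤
        Real.sqrt ((bb * m ^ 2) / aa) + Real.sqrt (D / aa) := by
      calc Real.sqrt (ω t ^ 2 + P t ^ 2) ≤ Real.sqrt ((bb * m ^ 2 + D) / aa) :=
            Real.sqrt_le_sqrt hsq1
        _ = Real.sqrt ((bb * m ^ 2) / aa + D / aa) := by rw [add_div]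
        _ ≤ _ := sqrt_add_le (by positivity) (by positivity)
    have hγval : Real.sqrt ((bb * m ^ 2) / aa) = γ wbar := by
      rw [hγw]
      have e : (bb * m ^ 2) / aa = (bb / aa) * m ^ 2 := by ring
      rw [e, Real.sqrt_mul (by positivity), Real.sqrt_sq hmpos.le]
    have hkl : klfun aa bb κ 1 0 s₀ (t - t₀) = Real.sqrt (D / aa) + s₀ * Real.exp (-(t - t₀)) := by
      unfold klfun
      have hmin0 : min (bb * s₀ ^ 2) 0 = (0:ℝ) := min_eq_right (by positivity)
      rw [hmin0, zero_mul, max_comm (bb * s₀ ^ 2 - κ * (t - t₀)) 0, ← max_assoc, max_self]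
    have hexps : 0 ≤ s₀ * Real.exp (-(t - t₀)) := mul_nonneg hs₀nn (Real.exp_nonneg _)
    rw [hkl]
    rw [← hγval]
    linarith only [hsq2, hexps]
end

section
/- Consider the multi-unit model 2H_T ω̇ = P - Σ_{i=1}^{n} sat_{M_i}(d_i ω) + w, τ Ṗ = -P - D ω, with H_T, τ, D > 0, n ≥ 1, and d_i, M_i > 0 for each i, and w ≡ 0. Then the origin is globally asymptotically stable with Lyapunov function V(ω, P) = H_T ω² + (τ/(2D)) P², whose derivative is V̇ = -P²/D - ω·Σ_i sat_{M_i}(d_i ω) < 0 for (ω, P) ≠ (0,0). -/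
lemma sat_mul_eq (M dd a : ℝ) (hd : 0 < dd) (hM : 0 < M) :
    a * sat M (dd * a) = |a| * min (dd * |a|) M := by
  rcases lt_trichotomy a 0 with h | h | h
  · rw [abs_of_neg h]
    have h1 : min (dd * a) M = dd * a := min_eq_left (by nlinarith)
    rw [sat, h1]
    rcases le_total (-M) (dd * a) with h2 | h2
    · rw [max_eq_right h2, min_eq_left (by linarith [neg_le.mp h2] : dd * -a ≤ M)]
      ring
    · rw [max_eq_left h2, min_eq_right (by linarith [le_neg.mp h2] : M ≤ dd * -a)]
      ring
  · simp [h, sat, hM.le]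
  · rw [abs_of_pos h]
    have h1 : max (-M) (min (dd * a) M) = min (dd * a) M :=
      max_eq_right (le_min (by nlinarith) (by linarith))
    rw [sat, h1]

/-- Global asymptotic stability of the origin for the multi-unit class-B model
`2H_T ω̇ = P - Σᵢ sat_{Mᵢ}(dᵢ ω)`, `τ Ṗ = -P - D ω` (zero input), with
Lyapunov function `V = H_T ω² + (τ/(2D)) P²` whose derivative
`-P²/D - ω Σᵢ sat_{Mᵢ}(dᵢ ω)` is negative away from the origin. -/
theorem stmt15 (HT τ D : ℝ) (n : ℕ) (d Mi : ℕ → ℝ)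
    (hHT : 0 < HT) (hτ : 0 < τ) (hD : 0 < D) (hn : 1 ≤ n)
    (hd : ∀ i < n, 0 < d i) (hMi : ∀ i < n, 0 < Mi i) :
    (∀ a b : ℝ, (a, b) ≠ (0, 0) →
      -(b ^ 2) / D - a * ∑ i ∈ Finset.range n, sat (Mi i) (d i * a) < 0) ∧
    (∀ ω P : ℝ → ℝ,
      (∀ t, HasDerivAt ω
        ((P t - ∑ i ∈ Finset.range n, sat (Mi i) (d i * ω t)) / (2 * HT)) t) →
      (∀ t, HasDerivAt P ((-P t - D * ω t) / τ) t) →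
      (∀ t, HasDerivAt (fun s => HT * (ω s) ^ 2 + τ / (2 * D) * (P s) ^ 2)
        (-(P t) ^ 2 / D - ω t * ∑ i ∈ Finset.range n, sat (Mi i) (d i * ω t)) t) ∧
      Filter.Tendsto (fun t => (ω t, P t)) Filter.atTop (nhds (0, 0))) := by
  have hSid : ∀ a : ℝ, a * ∑ i ∈ Finset.range n, sat (Mi i) (d i * a)
      = ∑ i ∈ Finset.range n, |a| * min (d i * |a|) (Mi i) := by
    intro a
    rw [Finset.mul_sum]
    refine Finset.sum_congr rfl fun i hi => ?_
    exact sat_mul_eq _ _ _ (hd i (Finset.mem_range.mp hi)) (hMi i (Finset.mem_range.mp hi))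
  have hterm_nonneg : ∀ a : ℝ, ∀ i ∈ Finset.range n,
      0 ≤ |a| * min (d i * |a|) (Mi i) := by
    intro a i hi
    exact mul_nonneg (abs_nonneg a)
      (le_min (mul_nonneg (hd i (Finset.mem_range.mp hi)).le (abs_nonneg a))
        (hMi i (Finset.mem_range.mp hi)).le)
  have hS_nonneg : ∀ a : ℝ, 0 ≤ a * ∑ i ∈ Finset.range n, sat (Mi i) (d i * a) := by
    intro a; rw [hSid]; exact Finset.sum_nonneg (hterm_nonneg a)
  have h0mem : (0 : ℕ) ∈ Finset.range n := Finset.mem_range.mpr hn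
  have hS_lb : ∀ a : ℝ, |a| * min (d 0 * |a|) (Mi 0)
      ≤ a * ∑ i ∈ Finset.range n, sat (Mi i) (d i * a) := by
    intro a; rw [hSid]
    exact Finset.single_le_sum (hterm_nonneg a) h0mem
  have hd0 := hd 0 hn
  have hM0 := hMi 0 hn
  -- Part 1
  have part1 : ∀ a b : ℝ, (a, b) ≠ (0, 0) →
      -(b ^ 2) / D - a * ∑ i ∈ Finset.range n, sat (Mi i) (d i * a) < 0 := by
    intro a b hab
    by_cases ha : a = 0
    · have hb : b ≠ 0 := by
        intro hb; exact hab (by rw [ha, hb])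
      have : 0 < b ^ 2 := by positivity
      have h1 : -(b ^ 2) / D < 0 := div_neg_of_neg_of_pos (by linarith) hD
      have h2 := hS_nonneg a
      linarith
    · have h1 : -(b ^ 2) / D ≤ 0 := by
        apply div_nonpos_of_nonpos_of_nonneg (neg_nonpos.mpr (sq_nonneg _)) hD.le
      have ha' : 0 < |a| := abs_pos.mpr ha
      have h2 : 0 < |a| * min (d 0 * |a|) (Mi 0) :=
        mul_pos ha' (lt_min (by positivity) hM0)
      have h3 := hS_lb a
      linarith
  refine ⟨part1, ?_⟩
  intro ω P hω hP
  set S : ℝ → ℝ := fun a => ∑ i ∈ Finset.range n, sat (Mi i) (d i * a) with hSdef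
  set W : ℝ → ℝ → ℝ := fun a b => -(b ^ 2) / D - a * S a with hWdef
  have hV : ∀ t, HasDerivAt (fun s => HT * (ω s) ^ 2 + τ / (2 * D) * (P s) ^ 2)
      (W (ω t) (P t)) t := by
    intro t
    have h1 := (((hω t).pow 2).const_mul HT).add (((hP t).pow 2).const_mul (τ / (2 * D)))
    refine HasDerivAt.congr_deriv h1 ?_
    simp only [hWdef]
    field_simp
    ring
  refine ⟨hV, ?_⟩
  set V : ℝ → ℝ := fun s => HT * (ω s) ^ 2 + τ / (2 * D) * (P s) ^ 2 with hVdef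
  have hVnonneg : ∀ t, 0 ≤ V t := by
    intro t; have : 0 ≤ τ / (2 * D) := by positivity
    have := sq_nonneg (ω t); have := sq_nonneg (P t); positivity
  have hWnonpos : ∀ t, W (ω t) (P t) ≤ 0 := by
    intro t
    have h1 : -(P t ^ 2) / D ≤ 0 := div_nonpos_of_nonpos_of_nonneg (neg_nonpos.mpr (sq_nonneg _)) hD.le
    have h2 := hS_nonneg (ω t)
    simp only [hWdef]
    linarith
  have hVanti : Antitone V := by
    apply antitone_of_deriv_nonpos
    · exact fun t => (hV t).differentiableAt
    · intro t; rw [(hV t).deriv]; exact hWnonpos t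
  have hbdd : BddBelow (Set.range V) := ⟨0, by rintro x ⟨t, rfl⟩; exact hVnonneg t⟩
  set c : ℝ := ⨅ t, V t with hcdef
  have hVtend : Filter.Tendsto V Filter.atTop (nhds c) := tendsto_atTop_ciInf hVanti hbdd
  have hcle : ∀ t, c ≤ V t := fun t => ciInf_le hbdd t
  have hc0 : 0 ≤ c := le_ciInf hVnonneg
  -- c = 0 by contradiction
  have hceq : c = 0 := by
    by_contra hc
    have hcpos : 0 < c := lt_of_le_of_ne hc0 (Ne.symm hc)
    set δ : ℝ := Real.sqrt (c / (2 * HT)) with hδdef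
    have hδpos : 0 < δ := Real.sqrt_pos.mpr (by positivity)
    set η : ℝ := δ * min (d 0 * δ) (Mi 0) with hηdef
    have hηpos : 0 < η := mul_pos hδpos (lt_min (by positivity) hM0)
    set ε : ℝ := min (c / τ) η with hεdef
    have hεpos : 0 < ε := lt_min (by positivity) hηpos
    -- pointwise bound W ≤ -ε for t with c ≤ V t
    have hWbound : ∀ t, W (ω t) (P t) ≤ -ε := by
      intro t
      have hVt := hcle t
      by_cases hcase : c / 2 ≤ HT * (ω t) ^ 2
      · -- |ω t| ≥ δ
        have h1 : c / (2 * HT) ≤ (ω t) ^ 2 := by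
          rw [div_le_iff₀ (by positivity)]; nlinarith
        have h2 : δ ≤ |ω t| := by
          rw [hδdef, ← Real.sqrt_sq_eq_abs]
          exact Real.sqrt_le_sqrt h1
        have h3 : η ≤ |ω t| * min (d 0 * |ω t|) (Mi 0) := by
          apply mul_le_mul h2 (min_le_min (by nlinarith) le_rfl) (le_min (by positivity) hM0.le) (abs_nonneg _)
        have h4 := hS_lb (ω t)
        have h5 : -((P t) ^ 2) / D ≤ 0 := div_nonpos_of_nonpos_of_nonneg (neg_nonpos.mpr (sq_nonneg _)) hD.le
        have h6 : ε ≤ η := min_le_right _ _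
        simp only [hWdef]
        have : η ≤ ω t * S (ω t) := le_trans h3 h4
        linarith
      · -- (P t)^2 large
        push_neg at hcase
        have h1 : c / 2 ≤ τ / (2 * D) * (P t) ^ 2 := by
          simp only [hVdef] at hVt; linarith
        have h2 : c / τ ≤ (P t) ^ 2 / D := by
          rw [div_le_div_iff₀ hτ hD]
          have := h1
          rw [div_mul_eq_mul_div, le_div_iff₀ (by positivity)] at this
          nlinarith
        have h3 := hS_nonneg (ω t)
        have h6 : ε ≤ c / τ := min_le_left _ _
        simp only [hWdef]
        have : -((P t) ^ 2) / D ≤ -(c / τ) := by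
          rw [neg_div]; linarith
        linarith
    -- g t = V t + ε t is antitone, contradiction
    have hlin : ∀ t : ℝ, HasDerivAt (fun s : ℝ => ε * s) ε t := by
      intro t
      simpa using (hasDerivAt_id t).const_mul ε
    have hg : Antitone (fun t => V t + ε * t) := by
      apply antitone_of_deriv_nonpos
      · exact fun t => ((hV t).add (hlin t)).differentiableAt
      · intro t
        rw [show (fun t => V t + ε * t) = V + fun s => ε * s from rfl, ((hV t).add (hlin t)).deriv]
        have := hWbound t
        linarith
    have hT0 : (0:ℝ) ≤ (V 0 - c) / ε + 1 := by
      have h := div_nonneg (by linarith [hcle 0] : (0:ℝ) ≤ V 0 - c) hεpos.le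
      linarith
    have hgT := hg hT0
    simp only at hgT
    have hmul : ε * ((V 0 - c) / ε + 1) = (V 0 - c) + ε := by
      field_simp
    rw [hmul, mul_zero] at hgT
    have := hcle ((V 0 - c) / ε + 1)
    linarith
  rw [hceq] at hVtend
  -- extract tendsto of components
  have hsqω : Filter.Tendsto (fun t => (ω t) ^ 2) Filter.atTop (nhds 0) := by
    have h1 : Filter.Tendsto (fun t => HT * (ω t) ^ 2) Filter.atTop (nhds 0) := by
      apply squeeze_zero (fun t => by positivity) (fun t => ?_) hVtend
      have : 0 ≤ τ / (2 * D) * (P t) ^ 2 := by positivity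
      simp only [hVdef]; linarith
    have := h1.const_mul (1 / HT)
    simp only [mul_zero] at this
    convert this using 2 with t
    field_simp
  have hsqP : Filter.Tendsto (fun t => (P t) ^ 2) Filter.atTop (nhds 0) := by
    have h1 : Filter.Tendsto (fun t => τ / (2 * D) * (P t) ^ 2) Filter.atTop (nhds 0) := by
      apply squeeze_zero (fun t => by positivity) (fun t => ?_) hVtend
      have : 0 ≤ HT * (ω t) ^ 2 := by positivity
      simp only [hVdef]; linarith
    have := h1.const_mul (2 * D / τ)
    simp only [mul_zero] at this
    convert this using 2 with t
    field_simp
  have hsq : Filter.Tendsto Real.sqrt (nhds 0) (nhds 0) := by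
    simpa using (Real.continuous_sqrt.tendsto 0)
  have hωt : Filter.Tendsto ω Filter.atTop (nhds 0) := by
    apply (tendsto_zero_iff_abs_tendsto_zero ω).mpr
    have h : abs ∘ ω = fun t => Real.sqrt ((ω t) ^ 2) :=
      funext fun t => (Real.sqrt_sq_eq_abs _).symm
    rw [h]
    exact hsq.comp hsqω
  have hPt : Filter.Tendsto P Filter.atTop (nhds 0) := by
    apply (tendsto_zero_iff_abs_tendsto_zero P).mpr
    have h : abs ∘ P = fun t => Real.sqrt ((P t) ^ 2) :=
      funext fun t => (Real.sqrt_sq_eq_abs _).symm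
    rw [h]
    exact hsq.comp hsqP
  rw [show ((0, 0) : ℝ × ℝ) = ((0 : ℝ), (0 : ℝ)) from rfl, nhds_prod_eq]
  exact hωt.prodMk hPt
end
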